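/- arXiv:1508.00247 — 7 statements merged into one kernel-verified Lean document; each statement's English description precedes it below -/
import Mathlib

section
/- Let σ > 0 and let f, g, h : ℝ² → ℝ be smooth, everywhere-positive functions of the variables (y, s) satisfying the bilinear system (B1)–(B3). Define u = −∂ₛ²(log g), ρ = g²/(f h), and m = 2 + ρ·∂_y∂ₛ(log ρ). Then on all of ℝ²: (i) ∂ₛρ + ρ²·∂_y u = 0, and (ii) ∂ₛm + 2 m ρ ∂_y u − σ ρ² ∂_y ρ = 0. (These are the two-component Hunter–Saxton equations with κ = 2 written in the hodograph variables (y,s).) -/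
/-- Partial derivative in the first variable `y`. -/
noncomputable def pdy (f : ℝ → ℝ → ℝ) : ℝ → ℝ → ℝ :=
  fun y s => deriv (fun y' => f y' s) y

/-- Partial derivative in the second variable `s`. -/
noncomputable def pds (f : ℝ → ℝ → ℝ) : ℝ → ℝ → ℝ :=
  fun y s => deriv (fun s' => f y s') s

section kit
variable {w : ℝ → ℝ → ℝ}

lemma hasDerivAt_pds (hw : ContDiff ℝ (⊤ : ℕ∞) (Function.uncurry w)) (y s : ℝ) :
    HasDerivAt (fun s' => w y s') (pds w y s) s := by
  have h1 : HasFDerivAt (Function.uncurry w) (fderiv ℝ (Function.uncurry w) (y, s)) (y, s) :=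
    (hw.differentiable (by simp) (y, s)).hasFDerivAt
  have h2 : HasDerivAt (fun s' : ℝ => ((y : ℝ), s')) ((0 : ℝ), (1 : ℝ)) s :=
    (hasDerivAt_const s y).prodMk (hasDerivAt_id s)
  have h4 : HasDerivAt (fun s' => w y s')
      (fderiv ℝ (Function.uncurry w) (y, s) (0, 1)) s := h1.comp_hasDerivAt s h2
  simpa [pds, h4.deriv] using h4

lemma hasDerivAt_pdy (hw : ContDiff ℝ (⊤ : ℕ∞) (Function.uncurry w)) (y s : ℝ) :
    HasDerivAt (fun y' => w y' s) (pdy w y s) y := by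
  have h1 : HasFDerivAt (Function.uncurry w) (fderiv ℝ (Function.uncurry w) (y, s)) (y, s) :=
    (hw.differentiable (by simp) (y, s)).hasFDerivAt
  have h2 : HasDerivAt (fun y' : ℝ => ((y' : ℝ), s)) ((1 : ℝ), (0 : ℝ)) y :=
    (hasDerivAt_id y).prodMk (hasDerivAt_const y s)
  have h4 : HasDerivAt (fun y' => w y' s)
      (fderiv ℝ (Function.uncurry w) (y, s) (1, 0)) y := (h1.comp_hasDerivAt y h2 :)
  simpa [pdy, h4.deriv] using h4

lemma pds_eq_fderiv (hw : ContDiff ℝ (⊤ : ℕ∞) (Function.uncurry w)) (y s : ℝ) :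
    pds w y s = fderiv ℝ (Function.uncurry w) (y, s) (0, 1) := by
  have h1 : HasFDerivAt (Function.uncurry w) (fderiv ℝ (Function.uncurry w) (y, s)) (y, s) :=
    (hw.differentiable (by simp) (y, s)).hasFDerivAt
  have h2 : HasDerivAt (fun s' : ℝ => ((y : ℝ), s')) ((0 : ℝ), (1 : ℝ)) s :=
    (hasDerivAt_const s y).prodMk (hasDerivAt_id s)
  have h4 : HasDerivAt (fun s' => w y s')
      (fderiv ℝ (Function.uncurry w) (y, s) (0, 1)) s := h1.comp_hasDerivAt s h2
  exact h4.deriv.symm ▸ rfl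

lemma pdy_eq_fderiv (hw : ContDiff ℝ (⊤ : ℕ∞) (Function.uncurry w)) (y s : ℝ) :
    pdy w y s = fderiv ℝ (Function.uncurry w) (y, s) (1, 0) := by
  have h1 : HasFDerivAt (Function.uncurry w) (fderiv ℝ (Function.uncurry w) (y, s)) (y, s) :=
    (hw.differentiable (by simp) (y, s)).hasFDerivAt
  have h2 : HasDerivAt (fun y' : ℝ => ((y' : ℝ), s)) ((1 : ℝ), (0 : ℝ)) y :=
    (hasDerivAt_id y).prodMk (hasDerivAt_const y s)
  have h4 : HasDerivAt (fun y' => w y' s)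
      (fderiv ℝ (Function.uncurry w) (y, s) (1, 0)) y := (h1.comp_hasDerivAt y h2 :)
  exact h4.deriv.symm ▸ rfl

lemma contDiff_pds (hw : ContDiff ℝ (⊤ : ℕ∞) (Function.uncurry w)) :
    ContDiff ℝ (⊤ : ℕ∞) (Function.uncurry (pds w)) := by
  have h : Function.uncurry (pds w)
      = fun p : ℝ × ℝ => fderiv ℝ (Function.uncurry w) p (0, 1) := by
    funext p
    exact pds_eq_fderiv hw p.1 p.2
  rw [h]
  exact (hw.fderiv_right (by simp)).clm_apply contDiff_const

lemma contDiff_pdy (hw : ContDiff ℝ (⊤ : ℕ∞) (Function.uncurry w)) :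
    ContDiff ℝ (⊤ : ℕ∞) (Function.uncurry (pdy w)) := by
  have h : Function.uncurry (pdy w)
      = fun p : ℝ × ℝ => fderiv ℝ (Function.uncurry w) p (1, 0) := by
    funext p
    exact pdy_eq_fderiv hw p.1 p.2
  rw [h]
  exact (hw.fderiv_right (by simp)).clm_apply contDiff_const

lemma pdy_pds_comm (hw : ContDiff ℝ (⊤ : ℕ∞) (Function.uncurry w)) (y s : ℝ) :
    pdy (pds w) y s = pds (pdy w) y s := by
  set F := Function.uncurry w with hF
  have hd : Differentiable ℝ F := hw.differentiable (by simp)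
  have hd' : Differentiable ℝ (fderiv ℝ F) :=
    (hw.fderiv_right (m := (⊤ : ℕ∞)) (by simp)).differentiable (by simp)
  have hsymm := second_derivative_symmetric (f := F) (f' := fderiv ℝ F)
    (f'' := fderiv ℝ (fderiv ℝ F) (y, s))
    (fun p => (hd p).hasFDerivAt) ((hd' (y, s)).hasFDerivAt)
  have hcy : HasDerivAt (fun y' : ℝ => ((y' : ℝ), s)) ((1 : ℝ), (0 : ℝ)) y :=
    (hasDerivAt_id y).prodMk (hasDerivAt_const y s)
  have hcs : HasDerivAt (fun s' : ℝ => ((y : ℝ), s')) ((0 : ℝ), (1 : ℝ)) s :=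
    (hasDerivAt_const s y).prodMk (hasDerivAt_id s)
  have hf2 : HasFDerivAt (fderiv ℝ F) (fderiv ℝ (fderiv ℝ F) (y, s)) (y, s) :=
    (hd' (y, s)).hasFDerivAt
  have hy1 : HasDerivAt (fun y' => fderiv ℝ F (y', s))
      (fderiv ℝ (fderiv ℝ F) (y, s) (1, 0)) y := hf2.comp_hasDerivAt y hcy
  have hy2 : HasDerivAt (fun y' => fderiv ℝ F (y', s) (0, 1))
      (fderiv ℝ (fderiv ℝ F) (y, s) (1, 0) (0, 1)) y := by
    have := hy1.clm_apply (hasDerivAt_const y ((0 : ℝ), (1 : ℝ)))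
    simpa using this
  have hs1 : HasDerivAt (fun s' => fderiv ℝ F (y, s'))
      (fderiv ℝ (fderiv ℝ F) (y, s) (0, 1)) s := hf2.comp_hasDerivAt s hcs
  have hs2 : HasDerivAt (fun s' => fderiv ℝ F (y, s') (1, 0))
      (fderiv ℝ (fderiv ℝ F) (y, s) (0, 1) (1, 0)) s := by
    have := hs1.clm_apply (hasDerivAt_const s ((1 : ℝ), (0 : ℝ)))
    simpa using this
  have e1 : pdy (pds w) y s = fderiv ℝ (fderiv ℝ F) (y, s) (1, 0) (0, 1) := by
    have he : (fun y' => pds w y' s) = fun y' => fderiv ℝ F (y', s) (0, 1) :=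
      funext fun y' => pds_eq_fderiv hw y' s
    show deriv (fun y' => pds w y' s) y = _
    rw [he]
    exact hy2.deriv
  have e2 : pds (pdy w) y s = fderiv ℝ (fderiv ℝ F) (y, s) (0, 1) (1, 0) := by
    have he : (fun s' => pdy w y s') = fun s' => fderiv ℝ F (y, s') (1, 0) :=
      funext fun s' => pdy_eq_fderiv hw y s'
    show deriv (fun s' => pdy w y s') s = _
    rw [he]
    exact hs2.deriv
  rw [e1, e2, hsymm]

end kit

lemma core1 (F Fs Hs G Gy Gs Gys Gss G3 H : ℝ)
    (hF : F ≠ 0) (hG : G ≠ 0) (hH : H ≠ 0)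
    (h1 : G * Gys - Gy * Gs - G ^ 2 = -(F * H))
    (h4 : G * G3 - Gy * Gss - 2 * G * Gs = -(Fs * H + F * Hs)) :
    (2 * G * Gs * (F * H) - G ^ 2 * (Fs * H + F * Hs)) / (F * H) ^ 2
      + (G ^ 2 / (F * H)) ^ 2 *
        (-(((G3 * G + Gss * Gy - 2 * Gys * Gs) * G ^ 2
            - (Gss * G - Gs ^ 2) * (2 * G * Gy)) / (G ^ 2) ^ 2)) = 0 := by
  have eGys : Gys = (Gy * Gs + G ^ 2 - F * H) / G := by
    rw [eq_div_iff hG]; linear_combination h1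
  have eG3 : G3 = (Gy * Gss + 2 * G * Gs - Fs * H - F * Hs) / G := by
    rw [eq_div_iff hG]; linear_combination h4
  subst eGys eG3
  field_simp
  ring

set_option maxHeartbeats 1000000 in
lemma core2 (r F Fy Fs Fys Fss F3 G Gy Gs Gys Gss G3 H Hy Hs Hys Hss H3 : ℝ)
    (hr : r ≠ 0) (hF : F ≠ 0) (hG : G ≠ 0) (hH : H ≠ 0)
    (h1 : G * Gys - Gy * Gs - G ^ 2 = -(F * H))
    (h2 : Fs * H - F * Hs = r * (G ^ 2 - F * H))
    (h3 : r * (Fys * H - Fy * Hs - Fs * Hy + F * Hys) + 2 * (Fs * H - F * Hs)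
      + r ^ 2 * (Fy * H - F * Hy) = 0)
    (h4 : G * G3 - Gy * Gss - 2 * G * Gs = -(Fs * H + F * Hs))
    (h5 : (Fys * H + Fs * Hy - Fy * Hs - F * Hys) + r * (Fy * H + F * Hy)
      = 2 * r * G * Gy)
    (h6 : (Fss * H - F * Hss) + r * (Fs * H + F * Hs) = 2 * r * G * Gs)
    (h7 : r * (F3 * H - Fy * Hss - Fss * Hy + F * H3) + 2 * (Fss * H - F * Hss)
      + r ^ 2 * (Fys * H + Fy * Hs - Fs * Hy - F * Hys) = 0) :
    ((2 * G * Gs * (F * H) - G ^ 2 * (Fs * H + F * Hs)) / (F * H) ^ 2)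
        * (2 * ((Gys * G - Gs * Gy) / G ^ 2) - (Fys * F - Fs * Fy) / F ^ 2
            - (Hys * H - Hs * Hy) / H ^ 2)
      + (G ^ 2 / (F * H)) *
          (2 * (((G3 * G + Gys * Gs - Gss * Gy - Gs * Gys) * G ^ 2
                - (Gys * G - Gs * Gy) * (2 * G * Gs)) / (G ^ 2) ^ 2)
            - ((F3 * F + Fys * Fs - Fss * Fy - Fs * Fys) * F ^ 2
                - (Fys * F - Fs * Fy) * (2 * F * Fs)) / (F ^ 2) ^ 2
            - ((H3 * H + Hys * Hs - Hss * Hy - Hs * Hys) * H ^ 2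
                - (Hys * H - Hs * Hy) * (2 * H * Hs)) / (H ^ 2) ^ 2)
      + 2 * (2 + (G ^ 2 / (F * H)) *
            (2 * ((Gys * G - Gs * Gy) / G ^ 2) - (Fys * F - Fs * Fy) / F ^ 2
              - (Hys * H - Hs * Hy) / H ^ 2))
          * (G ^ 2 / (F * H)) *
          (-(((G3 * G + Gss * Gy - 2 * Gys * Gs) * G ^ 2
              - (Gss * G - Gs ^ 2) * (2 * G * Gy)) / (G ^ 2) ^ 2))
      - r ^ 2 * (G ^ 2 / (F * H)) ^ 2 *
          ((2 * G * Gy * (F * H) - G ^ 2 * (Fy * H + F * Hy)) / (F * H) ^ 2) = 0 := by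
  have eGys : Gys = (Gy * Gs + G ^ 2 - F * H) / G := by
    rw [eq_div_iff hG]; linear_combination h1
  have eHs : Hs = (Fs * H - r * G ^ 2 + r * F * H) / F := by
    rw [eq_div_iff hF]; linear_combination -h2
  have eFys : Fys = (r * Fy * Hs - (Fs * H - F * Hs) - r ^ 2 * Fy * H + r ^ 2 * G * Gy)
      / (r * H) := by
    rw [eq_div_iff (mul_ne_zero hr hH)]; linear_combination (1/2 : ℝ) * h3 + (r/2) * h5
  have eHys : Hys = (-2 * (Fs * H - F * Hs) - r ^ 2 * (Fy * H - F * Hy)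
      - r * (Fys * H - Fy * Hs - Fs * Hy)) / (r * F) := by
    rw [eq_div_iff (mul_ne_zero hr hF)]; linear_combination h3
  have eG3 : G3 = (Gy * Gss + 2 * G * Gs - Fs * H - F * Hs) / G := by
    rw [eq_div_iff hG]; linear_combination h4
  have eHss : Hss = (Fss * H + r * (Fs * H + F * Hs) - 2 * r * G * Gs) / F := by
    rw [eq_div_iff hF]; linear_combination -h6
  have eH3 : H3 = (-2 * (Fss * H - F * Hss) - r ^ 2 * (Fys * H + Fy * Hs - Fs * Hy - F * Hys)
      - r * (F3 * H - Fy * Hss - Fss * Hy)) / (r * F) := by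
    rw [eq_div_iff (mul_ne_zero hr hF)]; linear_combination h7
  subst eGys eFys eHys eG3 eH3 eHss eHs
  field_simp
  ring
set_option maxHeartbeats 4000000 in
/-- the bilinear system (B1)-(B3) implies the two-component
Hunter-Saxton equations (κ = 2) in the hodograph variables (y,s). -/
theorem twoHS_from_bilinear (σ : ℝ) (hσ : 0 < σ) (f g h : ℝ → ℝ → ℝ)
    (hf : ContDiff ℝ (⊤ : ℕ∞) (Function.uncurry f))
    (hg : ContDiff ℝ (⊤ : ℕ∞) (Function.uncurry g))
    (hh : ContDiff ℝ (⊤ : ℕ∞) (Function.uncurry h))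
    (hfpos : ∀ y s, 0 < f y s) (hgpos : ∀ y s, 0 < g y s)
    (hhpos : ∀ y s, 0 < h y s)
    (hB1 : ∀ y s, g y s * pdy (pds g) y s - pdy g y s * pds g y s - (g y s) ^ 2
      = -(f y s * h y s))
    (hB2 : ∀ y s, (Real.sqrt σ)⁻¹ * (pds f y s * h y s - f y s * pds h y s)
      + f y s * h y s = (g y s) ^ 2)
    (hB3 : ∀ y s, (pdy (pds f) y s * h y s - pdy f y s * pds h y s
        - pds f y s * pdy h y s + f y s * pdy (pds h) y s)
      + 2 / Real.sqrt σ * (pds f y s * h y s - f y s * pds h y s)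
      + Real.sqrt σ * (pdy f y s * h y s - f y s * pdy h y s) = 0)
    (u ρ m : ℝ → ℝ → ℝ)
    (hu : u = fun y s => -(pds (pds (fun a b => Real.log (g a b))) y s))
    (hρ : ρ = fun y s => (g y s) ^ 2 / (f y s * h y s))
    (hm : m = fun y s => 2 + ρ y s * pdy (pds (fun a b => Real.log (ρ a b))) y s) :
    (∀ y s, pds ρ y s + (ρ y s) ^ 2 * pdy u y s = 0) ∧
    (∀ y s, pds m y s + 2 * m y s * ρ y s * pdy u y s
      - σ * (ρ y s) ^ 2 * pdy ρ y s = 0) := by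
  subst hρ
  subst hm
  subst hu
  have hr : (0:ℝ) < Real.sqrt σ := Real.sqrt_pos.2 hσ
  have hrne : Real.sqrt σ ≠ 0 := hr.ne'
  have hr2 : Real.sqrt σ ^ 2 = σ := Real.sq_sqrt hσ.le
  have hfs := contDiff_pds hf
  have hgs := contDiff_pds hg
  have hhs := contDiff_pds hh
  have hfy := contDiff_pdy hf
  have hgy := contDiff_pdy hg
  have hhy := contDiff_pdy hh
  have hfys := contDiff_pdy hfs
  have hgys := contDiff_pdy hgs
  have hhys := contDiff_pdy hhs
  have hgss := contDiff_pds hgs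
  have hFne : ∀ y s, f y s ≠ 0 := fun y s => (hfpos y s).ne'
  have hGne : ∀ y s, g y s ≠ 0 := fun y s => (hgpos y s).ne'
  have hHne : ∀ y s, h y s ≠ 0 := fun y s => (hhpos y s).ne'
  have hFHne : ∀ y s, f y s * h y s ≠ 0 := fun y s => mul_ne_zero (hFne y s) (hHne y s)
  have hF2ne : ∀ y s, f y s ^ 2 ≠ 0 := fun y s => pow_ne_zero 2 (hFne y s)
  have hG2ne : ∀ y s, g y s ^ 2 ≠ 0 := fun y s => pow_ne_zero 2 (hGne y s)
  have hH2ne : ∀ y s, h y s ^ 2 ≠ 0 := fun y s => pow_ne_zero 2 (hHne y s)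
  have commf : ∀ y s, pds (pdy f) y s = pdy (pds f) y s := fun y s => (pdy_pds_comm hf y s).symm
  have commg : ∀ y s, pds (pdy g) y s = pdy (pds g) y s := fun y s => (pdy_pds_comm hg y s).symm
  have commh : ∀ y s, pds (pdy h) y s = pdy (pds h) y s := fun y s => (pdy_pds_comm hh y s).symm
  have comm3g : ∀ y s, pdy (pds (pds g)) y s = pds (pdy (pds g)) y s :=
    fun y s => pdy_pds_comm hgs y s
  -- log derivatives of g
  have eLg1 : pds (fun a b => Real.log (g a b)) = fun a b => pds g a b / g a b := by
    funext a b
    have := ((hasDerivAt_pds hg a b).log (hGne a b)).deriv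
    simpa [pds] using this
  have eLg2 : pds (pds (fun a b => Real.log (g a b)))
      = fun a b => (pds (pds g) a b * g a b - pds g a b * pds g a b) / g a b ^ 2 := by
    rw [eLg1]
    funext a b
    have := ((hasDerivAt_pds hgs a b).div (hasDerivAt_pds hg a b) (hGne a b)).deriv
    simpa [pds, Pi.mul_def, Pi.add_def, Pi.div_def, Pi.sub_def, Pi.pow_def, Pi.neg_def] using this
  -- log derivatives of rho
  have eLr0 : (fun a b => Real.log (g a b ^ 2 / (f a b * h a b)))
      = fun a b => 2 * Real.log (g a b) - Real.log (f a b) - Real.log (h a b) := by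
    funext a b
    rw [Real.log_div (hG2ne a b) (hFHne a b), Real.log_mul (hFne a b) (hHne a b),
      Real.log_pow]
    push_cast
    ring
  have eLr1 : pds (fun a b => Real.log (g a b ^ 2 / (f a b * h a b)))
      = fun a b => 2 * (pds g a b / g a b) - pds f a b / f a b - pds h a b / h a b := by
    rw [eLr0]
    funext a b
    have H := ((((hasDerivAt_pds hg a b).log (hGne a b)).const_mul (2:ℝ)).sub
      ((hasDerivAt_pds hf a b).log (hFne a b))).sub
      ((hasDerivAt_pds hh a b).log (hHne a b))
    simpa [pds, Pi.mul_def, Pi.add_def, Pi.div_def, Pi.sub_def, Pi.pow_def, Pi.neg_def] using H.deriv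
  have eLr2 : pdy (pds (fun a b => Real.log (g a b ^ 2 / (f a b * h a b))))
      = fun a b => 2 * ((pdy (pds g) a b * g a b - pds g a b * pdy g a b) / g a b ^ 2)
        - (pdy (pds f) a b * f a b - pds f a b * pdy f a b) / f a b ^ 2
        - (pdy (pds h) a b * h a b - pds h a b * pdy h a b) / h a b ^ 2 := by
    rw [eLr1]
    funext a b
    have H := ((((hasDerivAt_pdy hgs a b).div (hasDerivAt_pdy hg a b) (hGne a b)).const_mul
        (2:ℝ)).sub
      ((hasDerivAt_pdy hfs a b).div (hasDerivAt_pdy hf a b) (hFne a b))).sub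
      ((hasDerivAt_pdy hhs a b).div (hasDerivAt_pdy hh a b) (hHne a b))
    simpa [pdy, Pi.mul_def, Pi.add_def, Pi.div_def, Pi.sub_def, Pi.pow_def, Pi.neg_def] using H.deriv
  -- derivative values
  have E1 : ∀ y s, pds (fun y s => g y s ^ 2 / (f y s * h y s)) y s
      = (2 * g y s * pds g y s * (f y s * h y s)
          - g y s ^ 2 * (pds f y s * h y s + f y s * pds h y s)) / (f y s * h y s) ^ 2 := by
    intro y s
    have H := ((hasDerivAt_pds hg y s).pow 2).div
      ((hasDerivAt_pds hf y s).mul (hasDerivAt_pds hh y s)) (hFHne y s)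
    simp only [Pi.mul_def, Pi.add_def, Pi.div_def, Pi.sub_def, Pi.pow_def, Pi.neg_def] at H
    have e := H.deriv
    show deriv (fun s' => g y s' ^ 2 / (f y s' * h y s')) s = _
    rw [e]; push_cast; ring
  have E3 : ∀ y s, pdy (fun y s => g y s ^ 2 / (f y s * h y s)) y s
      = (2 * g y s * pdy g y s * (f y s * h y s)
          - g y s ^ 2 * (pdy f y s * h y s + f y s * pdy h y s)) / (f y s * h y s) ^ 2 := by
    intro y s
    have H := ((hasDerivAt_pdy hg y s).pow 2).div
      ((hasDerivAt_pdy hf y s).mul (hasDerivAt_pdy hh y s)) (hFHne y s)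
    simp only [Pi.mul_def, Pi.add_def, Pi.div_def, Pi.sub_def, Pi.pow_def, Pi.neg_def] at H
    have e := H.deriv
    show deriv (fun y' => g y' s ^ 2 / (f y' s * h y' s)) y = _
    rw [e]; push_cast; ring
  have E2 : ∀ y s, pdy (fun y s => -(pds (pds (fun a b => Real.log (g a b))) y s)) y s
      = -(((pds (pdy (pds g)) y s * g y s + pds (pds g) y s * pdy g y s
            - 2 * pdy (pds g) y s * pds g y s) * g y s ^ 2
          - (pds (pds g) y s * g y s - pds g y s ^ 2) * (2 * g y s * pdy g y s))
          / (g y s ^ 2) ^ 2) := by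
    intro y s
    show deriv (fun y' => -(pds (pds (fun a b => Real.log (g a b))) y' s)) y = _
    simp only [eLg2]
    have H := ((((hasDerivAt_pdy hgss y s).mul (hasDerivAt_pdy hg y s)).sub
      ((hasDerivAt_pdy hgs y s).mul (hasDerivAt_pdy hgs y s))).div
      ((hasDerivAt_pdy hg y s).pow 2) (hG2ne y s)).neg
    simp only [Pi.mul_def, Pi.add_def, Pi.div_def, Pi.sub_def, Pi.pow_def, Pi.neg_def] at H
    rw [H.deriv, comm3g y s]
    push_cast; ring
  -- cleaned bilinear hypotheses at each point
  have H2c : ∀ y s, pds f y s * h y s - f y s * pds h y s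
      = Real.sqrt σ * (g y s ^ 2 - f y s * h y s) := by
    intro y s
    have b := hB2 y s
    field_simp at b
    linear_combination b
  have H3c : ∀ y s, Real.sqrt σ * (pdy (pds f) y s * h y s - pdy f y s * pds h y s
        - pds f y s * pdy h y s + f y s * pdy (pds h) y s)
      + 2 * (pds f y s * h y s - f y s * pds h y s)
      + Real.sqrt σ ^ 2 * (pdy f y s * h y s - f y s * pdy h y s) = 0 := by
    intro y s
    have b := hB3 y s
    field_simp at b
    linear_combination b
  have H4c : ∀ y s, g y s * pds (pdy (pds g)) y s - pdy g y s * pds (pds g) y s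
      - 2 * g y s * pds g y s = -(pds f y s * h y s + f y s * pds h y s) := by
    intro y s
    have base : (fun s' => g y s' * pdy (pds g) y s' - pdy g y s' * pds g y s' - g y s' ^ 2)
        = fun s' => -(f y s' * h y s') := funext fun s' => hB1 y s'
    have d : deriv (fun s' => g y s' * pdy (pds g) y s' - pdy g y s' * pds g y s'
        - g y s' ^ 2) s = deriv (fun s' => -(f y s' * h y s')) s := by rw [base]
    have HL := (((hasDerivAt_pds hg y s).mul (hasDerivAt_pds hgys y s)).sub
      ((hasDerivAt_pds hgy y s).mul (hasDerivAt_pds hgs y s))).sub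
      ((hasDerivAt_pds hg y s).pow 2)
    have HR := ((hasDerivAt_pds hf y s).mul (hasDerivAt_pds hh y s)).neg
    simp only [Pi.mul_def, Pi.add_def, Pi.div_def, Pi.sub_def, Pi.pow_def, Pi.neg_def] at HL HR
    rw [HL.deriv, HR.deriv, commg y s] at d
    push_cast at d
    linear_combination d
  have H5c : ∀ y s, (pdy (pds f) y s * h y s + pds f y s * pdy h y s
        - pdy f y s * pds h y s - f y s * pdy (pds h) y s)
      + Real.sqrt σ * (pdy f y s * h y s + f y s * pdy h y s)
      = 2 * Real.sqrt σ * g y s * pdy g y s := by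
    intro y s
    have base : (fun y' => (Real.sqrt σ)⁻¹ * (pds f y' s * h y' s - f y' s * pds h y' s)
        + f y' s * h y' s) = fun y' => g y' s ^ 2 := funext fun y' => hB2 y' s
    have d : deriv (fun y' => (Real.sqrt σ)⁻¹ * (pds f y' s * h y' s - f y' s * pds h y' s)
        + f y' s * h y' s) y = deriv (fun y' => g y' s ^ 2) y := by rw [base]
    have HL := ((((hasDerivAt_pdy hfs y s).mul (hasDerivAt_pdy hh y s)).sub
      ((hasDerivAt_pdy hf y s).mul (hasDerivAt_pdy hhs y s))).const_mul
      (Real.sqrt σ)⁻¹).add ((hasDerivAt_pdy hf y s).mul (hasDerivAt_pdy hh y s))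
    have HR := (hasDerivAt_pdy hg y s).pow 2
    simp only [Pi.mul_def, Pi.add_def, Pi.div_def, Pi.sub_def, Pi.pow_def, Pi.neg_def] at HL HR
    rw [HL.deriv, HR.deriv] at d
    push_cast at d
    field_simp at d
    linear_combination d
  have H6c : ∀ y s, (pds (pds f) y s * h y s - f y s * pds (pds h) y s)
      + Real.sqrt σ * (pds f y s * h y s + f y s * pds h y s)
      = 2 * Real.sqrt σ * g y s * pds g y s := by
    intro y s
    have base : (fun s' => (Real.sqrt σ)⁻¹ * (pds f y s' * h y s' - f y s' * pds h y s')
        + f y s' * h y s') = fun s' => g y s' ^ 2 := funext fun s' => hB2 y s'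
    have d : deriv (fun s' => (Real.sqrt σ)⁻¹ * (pds f y s' * h y s' - f y s' * pds h y s')
        + f y s' * h y s') s = deriv (fun s' => g y s' ^ 2) s := by rw [base]
    have HL := ((((hasDerivAt_pds hfs y s).mul (hasDerivAt_pds hh y s)).sub
      ((hasDerivAt_pds hf y s).mul (hasDerivAt_pds hhs y s))).const_mul
      (Real.sqrt σ)⁻¹).add ((hasDerivAt_pds hf y s).mul (hasDerivAt_pds hh y s))
    have HR := (hasDerivAt_pds hg y s).pow 2
    simp only [Pi.mul_def, Pi.add_def, Pi.div_def, Pi.sub_def, Pi.pow_def, Pi.neg_def] at HL HR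
    rw [HL.deriv, HR.deriv] at d
    push_cast at d
    field_simp at d
    linear_combination d
  have H7c : ∀ y s, Real.sqrt σ * (pds (pdy (pds f)) y s * h y s
        - pdy f y s * pds (pds h) y s - pds (pds f) y s * pdy h y s
        + f y s * pds (pdy (pds h)) y s)
      + 2 * (pds (pds f) y s * h y s - f y s * pds (pds h) y s)
      + Real.sqrt σ ^ 2 * (pdy (pds f) y s * h y s + pdy f y s * pds h y s
        - pds f y s * pdy h y s - f y s * pdy (pds h) y s) = 0 := by
    intro y s
    have base : (fun s' => (pdy (pds f) y s' * h y s' - pdy f y s' * pds h y s'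
          - pds f y s' * pdy h y s' + f y s' * pdy (pds h) y s')
        + 2 / Real.sqrt σ * (pds f y s' * h y s' - f y s' * pds h y s')
        + Real.sqrt σ * (pdy f y s' * h y s' - f y s' * pdy h y s'))
        = fun _ => (0:ℝ) := funext fun s' => hB3 y s'
    have d : deriv (fun s' => (pdy (pds f) y s' * h y s' - pdy f y s' * pds h y s'
          - pds f y s' * pdy h y s' + f y s' * pdy (pds h) y s')
        + 2 / Real.sqrt σ * (pds f y s' * h y s' - f y s' * pds h y s')
        + Real.sqrt σ * (pdy f y s' * h y s' - f y s' * pdy h y s')) s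
        = deriv (fun _ : ℝ => (0:ℝ)) s := by rw [base]
    have HA := ((((hasDerivAt_pds hfys y s).mul (hasDerivAt_pds hh y s)).sub
      ((hasDerivAt_pds hfy y s).mul (hasDerivAt_pds hhs y s))).sub
      ((hasDerivAt_pds hfs y s).mul (hasDerivAt_pds hhy y s))).add
      ((hasDerivAt_pds hf y s).mul (hasDerivAt_pds hhys y s))
    have HB := ((hasDerivAt_pds hfs y s).mul (hasDerivAt_pds hh y s)).sub
      ((hasDerivAt_pds hf y s).mul (hasDerivAt_pds hhs y s))
    have HC := ((hasDerivAt_pds hfy y s).mul (hasDerivAt_pds hh y s)).sub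
      ((hasDerivAt_pds hf y s).mul (hasDerivAt_pds hhy y s))
    have HL := (HA.add (HB.const_mul (2 / Real.sqrt σ))).add (HC.const_mul (Real.sqrt σ))
    simp only [Pi.mul_def, Pi.add_def, Pi.div_def, Pi.sub_def, Pi.pow_def, Pi.neg_def] at HL
    rw [HL.deriv, deriv_const, commf y s, commh y s] at d
    field_simp at d
    linear_combination d
  constructor
  · intro y s
    show pds (fun y s => g y s ^ 2 / (f y s * h y s)) y s
        + (g y s ^ 2 / (f y s * h y s)) ^ 2
          * pdy (fun y s => -(pds (pds (fun a b => Real.log (g a b))) y s)) y s = 0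
    rw [E1 y s, E2 y s]
    linear_combination core1 (f y s) (pds f y s) (pds h y s) (g y s) (pdy g y s)
      (pds g y s) (pdy (pds g) y s) (pds (pds g) y s) (pds (pdy (pds g)) y s) (h y s)
      (hFne y s) (hGne y s) (hHne y s) (hB1 y s) (H4c y s)
  · intro y s
    show pds (fun a b => 2 + g a b ^ 2 / (f a b * h a b)
          * pdy (pds (fun c d => Real.log (g c d ^ 2 / (f c d * h c d)))) a b) y s
        + 2 * (2 + g y s ^ 2 / (f y s * h y s)
          * pdy (pds (fun c d => Real.log (g c d ^ 2 / (f c d * h c d)))) y s)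
          * (g y s ^ 2 / (f y s * h y s))
          * pdy (fun a b => -(pds (pds (fun c d => Real.log (g c d))) a b)) y s
        - σ * (g y s ^ 2 / (f y s * h y s)) ^ 2
          * pdy (fun a b => g a b ^ 2 / (f a b * h a b)) y s = 0
    simp only [eLr2]
    rw [E2 y s, E3 y s]
    have e5 : pds (fun a b => 2 + g a b ^ 2 / (f a b * h a b)
        * (2 * ((pdy (pds g) a b * g a b - pds g a b * pdy g a b) / g a b ^ 2)
          - (pdy (pds f) a b * f a b - pds f a b * pdy f a b) / f a b ^ 2
          - (pdy (pds h) a b * h a b - pds h a b * pdy h a b) / h a b ^ 2)) y s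
        = ((2 * g y s * pds g y s * (f y s * h y s)
            - g y s ^ 2 * (pds f y s * h y s + f y s * pds h y s)) / (f y s * h y s) ^ 2)
          * (2 * ((pdy (pds g) y s * g y s - pds g y s * pdy g y s) / g y s ^ 2)
            - (pdy (pds f) y s * f y s - pds f y s * pdy f y s) / f y s ^ 2
            - (pdy (pds h) y s * h y s - pds h y s * pdy h y s) / h y s ^ 2)
        + (g y s ^ 2 / (f y s * h y s)) *
          (2 * (((pds (pdy (pds g)) y s * g y s + pdy (pds g) y s * pds g y s
                - pds (pds g) y s * pdy g y s - pds g y s * pdy (pds g) y s) * g y s ^ 2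
              - (pdy (pds g) y s * g y s - pds g y s * pdy g y s)
                * (2 * g y s * pds g y s)) / (g y s ^ 2) ^ 2)
            - ((pds (pdy (pds f)) y s * f y s + pdy (pds f) y s * pds f y s
                - pds (pds f) y s * pdy f y s - pds f y s * pdy (pds f) y s) * f y s ^ 2
              - (pdy (pds f) y s * f y s - pds f y s * pdy f y s)
                * (2 * f y s * pds f y s)) / (f y s ^ 2) ^ 2
            - ((pds (pdy (pds h)) y s * h y s + pdy (pds h) y s * pds h y s
                - pds (pds h) y s * pdy h y s - pds h y s * pdy (pds h) y s) * h y s ^ 2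
              - (pdy (pds h) y s * h y s - pds h y s * pdy h y s)
                * (2 * h y s * pds h y s)) / (h y s ^ 2) ^ 2) := by
      have Hρ := ((hasDerivAt_pds hg y s).pow 2).div
        ((hasDerivAt_pds hf y s).mul (hasDerivAt_pds hh y s)) (hFHne y s)
      have HKg := (((hasDerivAt_pds hgys y s).mul (hasDerivAt_pds hg y s)).sub
        ((hasDerivAt_pds hgs y s).mul (hasDerivAt_pds hgy y s))).div
        ((hasDerivAt_pds hg y s).pow 2) (hG2ne y s)
      have HKf := (((hasDerivAt_pds hfys y s).mul (hasDerivAt_pds hf y s)).sub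
        ((hasDerivAt_pds hfs y s).mul (hasDerivAt_pds hfy y s))).div
        ((hasDerivAt_pds hf y s).pow 2) (hF2ne y s)
      have HKh := (((hasDerivAt_pds hhys y s).mul (hasDerivAt_pds hh y s)).sub
        ((hasDerivAt_pds hhs y s).mul (hasDerivAt_pds hhy y s))).div
        ((hasDerivAt_pds hh y s).pow 2) (hH2ne y s)
      have HK := ((HKg.const_mul (2:ℝ)).sub HKf).sub HKh
      have H := (Hρ.mul HK).const_add 2
      simp only [Pi.mul_def, Pi.add_def, Pi.div_def, Pi.sub_def, Pi.pow_def, Pi.neg_def] at H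
      have e := H.deriv
      show deriv (fun s' => 2 + g y s' ^ 2 / (f y s' * h y s')
        * (2 * ((pdy (pds g) y s' * g y s' - pds g y s' * pdy g y s') / g y s' ^ 2)
          - (pdy (pds f) y s' * f y s' - pds f y s' * pdy f y s') / f y s' ^ 2
          - (pdy (pds h) y s' * h y s' - pds h y s' * pdy h y s') / h y s' ^ 2)) s = _
      rw [e, commg y s, commf y s, commh y s]
      push_cast
      ring
    rw [e5]
    linear_combination core2 (Real.sqrt σ) (f y s) (pdy f y s) (pds f y s)
      (pdy (pds f) y s) (pds (pds f) y s) (pds (pdy (pds f)) y s)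
      (g y s) (pdy g y s) (pds g y s) (pdy (pds g) y s) (pds (pds g) y s)
      (pds (pdy (pds g)) y s)
      (h y s) (pdy h y s) (pds h y s) (pdy (pds h) y s) (pds (pds h) y s)
      (pds (pdy (pds h)) y s)
      hrne (hFne y s) (hGne y s) (hHne y s)
      (hB1 y s) (H2c y s) (H3c y s) (H4c y s) (H5c y s) (H6c y s) (H7c y s)
      + (g y s ^ 2 / (f y s * h y s)) ^ 2
        * ((2 * g y s * pdy g y s * (f y s * h y s)
            - g y s ^ 2 * (pdy f y s * h y s + f y s * pdy h y s)) / (f y s * h y s) ^ 2)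
        * hr2
end

section
/- Let σ > 0 and let f, g, h : ℝ² → ℝ be smooth, everywhere-positive functions of (y,s) satisfying the bilinear system (B1)–(B3). Define ρ = g²/(f h). Then on all of ℝ²: 2 + ρ·∂_y∂ₛ(log ρ) = √σ · ρ² · ( ∂_y(log(f/h)) + 2/√σ ). -/

lemma contDiff_slice_y (U : ℝ → ℝ → ℝ) (hU : ContDiff ℝ (⊤ : ℕ∞) (Function.uncurry U)) (s : ℝ) :
    ContDiff ℝ (⊤ : ℕ∞) (fun y => U y s) :=
  hU.comp (contDiff_id.prodMk contDiff_const)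

lemma contDiff_slice_s (U : ℝ → ℝ → ℝ) (hU : ContDiff ℝ (⊤ : ℕ∞) (Function.uncurry U)) (y : ℝ) :
    ContDiff ℝ (⊤ : ℕ∞) (fun s => U y s) :=
  hU.comp (contDiff_const.prodMk contDiff_id)

lemma hasDerivAt_slice_y (U : ℝ → ℝ → ℝ) (hU : ContDiff ℝ (⊤ : ℕ∞) (Function.uncurry U)) (y s : ℝ) :
    HasDerivAt (fun y' => U y' s) (pdy U y s) y :=
  (((contDiff_slice_y U hU s).differentiable (by simp)) y).hasDerivAt

lemma hasDerivAt_slice_s (U : ℝ → ℝ → ℝ) (hU : ContDiff ℝ (⊤ : ℕ∞) (Function.uncurry U)) (y s : ℝ) :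
    HasDerivAt (fun s' => U y s') (pds U y s) s :=
  (((contDiff_slice_s U hU y).differentiable (by simp)) s).hasDerivAt

lemma contDiff_pdy_s2 (U : ℝ → ℝ → ℝ) (hU : ContDiff ℝ (⊤ : ℕ∞) (Function.uncurry U)) :
    ContDiff ℝ (⊤ : ℕ∞) (Function.uncurry (pdy U)) := by
  have key : Function.uncurry (pdy U)
      = fun p : ℝ × ℝ => fderiv ℝ (Function.uncurry U) p (1, 0) := by
    funext p
    obtain ⟨y, s⟩ := p
    have h1 : HasFDerivAt (Function.uncurry U) (fderiv ℝ (Function.uncurry U) (y, s)) (y, s) :=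
      ((hU.differentiable (by simp)) (y, s)).hasFDerivAt
    have h2 : HasDerivAt (fun y' : ℝ => ((y', s) : ℝ × ℝ)) (1, 0) y :=
      (hasDerivAt_id y).prodMk (hasDerivAt_const y s)
    have h3 := h1.comp_hasDerivAt y h2
    exact h3.deriv
  rw [key]
  exact (hU.fderiv_right (le_refl _)).clm_apply contDiff_const

lemma contDiff_pds_s2 (U : ℝ → ℝ → ℝ) (hU : ContDiff ℝ (⊤ : ℕ∞) (Function.uncurry U)) :
    ContDiff ℝ (⊤ : ℕ∞) (Function.uncurry (pds U)) := by
  have key : Function.uncurry (pds U)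
      = fun p : ℝ × ℝ => fderiv ℝ (Function.uncurry U) p (0, 1) := by
    funext p
    obtain ⟨y, s⟩ := p
    have h1 : HasFDerivAt (Function.uncurry U) (fderiv ℝ (Function.uncurry U) (y, s)) (y, s) :=
      ((hU.differentiable (by simp)) (y, s)).hasFDerivAt
    have h2 : HasDerivAt (fun s' : ℝ => ((y, s') : ℝ × ℝ)) (0, 1) s :=
      (hasDerivAt_const s y).prodMk (hasDerivAt_id s)
    have h3 := h1.comp_hasDerivAt s h2
    exact h3.deriv
  rw [key]
  exact (hU.fderiv_right (le_refl _)).clm_apply contDiff_const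

/-- from the bilinear system (B1)-(B3),
2 + ρ·∂_y∂ₛ(log ρ) = √σ·ρ²·(∂_y(log(f/h)) + 2/√σ), where ρ = g²/(fh). -/
theorem m_identity_from_bilinear (σ : ℝ) (hσ : 0 < σ) (f g h : ℝ → ℝ → ℝ)
    (hf : ContDiff ℝ (⊤ : ℕ∞) (Function.uncurry f))
    (hg : ContDiff ℝ (⊤ : ℕ∞) (Function.uncurry g))
    (hh : ContDiff ℝ (⊤ : ℕ∞) (Function.uncurry h))
    (hfpos : ∀ y s, 0 < f y s) (hgpos : ∀ y s, 0 < g y s)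
    (hhpos : ∀ y s, 0 < h y s)
    (hB1 : ∀ y s, g y s * pdy (pds g) y s - pdy g y s * pds g y s - (g y s) ^ 2
      = -(f y s * h y s))
    (hB2 : ∀ y s, (Real.sqrt σ)⁻¹ * (pds f y s * h y s - f y s * pds h y s)
      + f y s * h y s = (g y s) ^ 2)
    (hB3 : ∀ y s, (pdy (pds f) y s * h y s - pdy f y s * pds h y s
        - pds f y s * pdy h y s + f y s * pdy (pds h) y s)
      + 2 / Real.sqrt σ * (pds f y s * h y s - f y s * pds h y s)
      + Real.sqrt σ * (pdy f y s * h y s - f y s * pdy h y s) = 0)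
    (ρ : ℝ → ℝ → ℝ)
    (hρ : ρ = fun y s => (g y s) ^ 2 / (f y s * h y s)) :
    ∀ y s, 2 + ρ y s * pdy (pds (fun a b => Real.log (ρ a b))) y s
      = Real.sqrt σ * (ρ y s) ^ 2 *
        (pdy (fun a b => Real.log (f a b / h a b)) y s + 2 / Real.sqrt σ) := by
  intro y s
  have hlogρ : (fun a b => Real.log (ρ a b))
      = fun a b => 2 * Real.log (g a b) - Real.log (f a b) - Real.log (h a b) := by
    funext a b
    rw [hρ]
    have h1 : (g a b) ^ 2 ≠ 0 := pow_ne_zero 2 (hgpos a b).ne'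
    have h2 : f a b * h a b ≠ 0 := mul_ne_zero (hfpos a b).ne' (hhpos a b).ne'
    rw [Real.log_div h1 h2, Real.log_mul (hfpos a b).ne' (hhpos a b).ne', Real.log_pow]
    push_cast
    ring
  have hpdsL : pds (fun a b => Real.log (ρ a b))
      = fun a b => 2 * (pds g a b / g a b) - pds f a b / f a b - pds h a b / h a b := by
    rw [hlogρ]
    funext a b
    have Hg := (hasDerivAt_slice_s g hg a b).log (hgpos a b).ne'
    have Hf := (hasDerivAt_slice_s f hf a b).log (hfpos a b).ne'
    have Hh := (hasDerivAt_slice_s h hh a b).log (hhpos a b).ne'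
    exact (((HasDerivAt.const_mul (2:ℝ) Hg).sub Hf).sub Hh).deriv
  have key : pdy (pds (fun a b => Real.log (ρ a b))) y s
      = 2 * ((pdy (pds g) y s * g y s - pds g y s * pdy g y s) / (g y s) ^ 2)
        - (pdy (pds f) y s * f y s - pds f y s * pdy f y s) / (f y s) ^ 2
        - (pdy (pds h) y s * h y s - pds h y s * pdy h y s) / (h y s) ^ 2 := by
    rw [hpdsL]
    have Dg := (hasDerivAt_slice_y (pds g) (contDiff_pds_s2 g hg) y s).div
      (hasDerivAt_slice_y g hg y s) (hgpos y s).ne'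
    have Df := (hasDerivAt_slice_y (pds f) (contDiff_pds_s2 f hf) y s).div
      (hasDerivAt_slice_y f hf y s) (hfpos y s).ne'
    have Dh := (hasDerivAt_slice_y (pds h) (contDiff_pds_s2 h hh) y s).div
      (hasDerivAt_slice_y h hh y s) (hhpos y s).ne'
    exact (((HasDerivAt.const_mul (2:ℝ) Dg).sub Df).sub Dh).deriv
  have hE : pdy (fun a b => Real.log (f a b / h a b)) y s
      = pdy f y s / f y s - pdy h y s / h y s := by
    have hfun : (fun a b => Real.log (f a b / h a b))
        = fun a b => Real.log (f a b) - Real.log (h a b) := by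
      funext a b
      rw [Real.log_div (hfpos a b).ne' (hhpos a b).ne']
    rw [hfun]
    have Hf := (hasDerivAt_slice_y f hf y s).log (hfpos y s).ne'
    have Hh := (hasDerivAt_slice_y h hh y s).log (hhpos y s).ne'
    exact (Hf.sub Hh).deriv
  have e1 := hB1 y s
  have e2 := hB2 y s
  have e3 := hB3 y s
  have hS : Real.sqrt σ ≠ 0 := (Real.sqrt_pos.mpr hσ).ne'
  have hF : f y s ≠ 0 := (hfpos y s).ne'
  have hG : g y s ≠ 0 := (hgpos y s).ne'
  have hH : h y s ≠ 0 := (hhpos y s).ne'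
  rw [key, hE, hρ]
  simp only
  linear_combination (norm := skip) (2 / (f y s * h y s)) * e1
    + ((g y s)^2 / (f y s * h y s)^2 *
        (2 + Real.sqrt σ * (pdy f y s * h y s - f y s * pdy h y s) / (f y s * h y s))) * e2
    - ((g y s)^2 / (f y s * h y s)^2) * e3
  field_simp
  ring
end

section
/- Fix N ≥ 1, b ∈ ℝ, nonzero reals p_i, q_i with p_i⁻¹ ≠ b, q_i⁻¹ ≠ b, constants a_{i,1}, a_{i,2}, ξ_{i0}, η_{i0} ∈ ℝ, and let τ_n be the associated Casoratian. Then for every n ∈ ℤ, on all of ℝ⁴: τ_n · ∂_{x₁}∂_{x₋₁}τ_n − ∂_{x₁}τ_n · ∂_{x₋₁}τ_n − τ_n² = −τ_{n−1}·τ_{n+1} (the bilinear two-dimensional Toda lattice equation (½D_{x₁}D_{x₋₁} − 1)τ_n·τ_n = −τ_{n−1}τ_{n+1}). -/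
/-- Partial derivative in `x₁`. -/
noncomputable def pd1 (F : ℝ → ℝ → ℝ → ℝ → ℝ) : ℝ → ℝ → ℝ → ℝ → ℝ :=
  fun x1 x2 xm1 xm2 => deriv (fun t => F t x2 xm1 xm2) x1

/-- Partial derivative in `x₂`. -/
noncomputable def pd2 (F : ℝ → ℝ → ℝ → ℝ → ℝ) : ℝ → ℝ → ℝ → ℝ → ℝ :=
  fun x1 x2 xm1 xm2 => deriv (fun t => F x1 t xm1 xm2) x2

/-- Partial derivative in `x₋₁`. -/
noncomputable def pdm1 (F : ℝ → ℝ → ℝ → ℝ → ℝ) : ℝ → ℝ → ℝ → ℝ → ℝ :=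
  fun x1 x2 xm1 xm2 => deriv (fun t => F x1 x2 t xm2) xm1

/-- Partial derivative in `x₋₂`. -/
noncomputable def pdm2 (F : ℝ → ℝ → ℝ → ℝ → ℝ) : ℝ → ℝ → ℝ → ℝ → ℝ :=
  fun x1 x2 xm1 xm2 => deriv (fun t => F x1 x2 xm1 t) xm2

/-- The functions ψ_i^{(n)} of (x₁, x₂, x₋₁, x₋₂). -/
noncomputable def psi {N : ℕ} (b : ℝ) (p q a1 a2 ξ0 η0 : Fin N → ℝ)
    (i : Fin N) (n : ℤ) : ℝ → ℝ → ℝ → ℝ → ℝ :=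
  fun x1 x2 xm1 xm2 =>
    a1 i * ((p i)⁻¹ - b) ^ n *
      Real.exp (x1 / ((p i)⁻¹ - b) + x2 / ((p i)⁻¹ - b) ^ 2
        + (p i)⁻¹ * xm1 + ((p i)⁻¹) ^ 2 * xm2 + ξ0 i)
    + a2 i * ((q i)⁻¹ - b) ^ n *
      Real.exp (x1 / ((q i)⁻¹ - b) + x2 / ((q i)⁻¹ - b) ^ 2
        + (q i)⁻¹ * xm1 + ((q i)⁻¹) ^ 2 * xm2 + η0 i)

/-- The Casoratian τ_n = det[(ψ_i^{(n+j-1)})]. -/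
noncomputable def tau {N : ℕ} (b : ℝ) (p q a1 a2 ξ0 η0 : Fin N → ℝ)
    (n : ℤ) : ℝ → ℝ → ℝ → ℝ → ℝ :=
  fun x1 x2 xm1 xm2 =>
    Matrix.det (Matrix.of fun i j : Fin N =>
      psi b p q a1 a2 ξ0 η0 i (n + (j : ℕ)) x1 x2 xm1 xm2)

open Function Module

/-!
Both exponentials in `ψ_i^{(k)}` satisfy `∂_{x₁} ψ^{(k)} = ψ^{(k-1)}` and
`∂_{x₋₁} ψ^{(k)} = ψ^{(k+1)} + b ψ^{(k)}`. Differentiating the Casoratian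
`τ_n = |n, n+1, …, n+N-1|` column by column, every shifted column except an outer one repeats
its neighbour, so `∂_{x₁} τ_n = |n-1, n+1, …, n+N-1|`, `∂_{x₋₁} τ_n = |n, …, n+N-2, n+N| + N b τ_n`,
and the mixed derivative changes both outer columns. With the middle columns `n+1, …, n+N-2`
fixed, `ω(a, b) = |a, middle, b|` is an alternating form of rank at most two, hence satisfies the
three-term Plücker relation; for the columns `n-1, n, n+N-1, n+N` this relation is the bilinear
equation, since `τ_{n-1}` and `τ_{n+1}` are values of `ω` up to the same sign `(-1)^N`.
For `N ≤ 1` the equation is checked directly.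
-/

namespace AlternatingMap

variable {K V ι : Type*} [Field K] [AddCommGroup V] [Module K V] [DecidableEq ι]
  (D : V [⋀^ι]→ₗ[K] K) (w : ι → V) {j k : ι}

theorem map_update_update_swap (hjk : j ≠ k) (x y : V) :
    D (update (update w j y) k x) = -D (update (update w j x) k y) := by
  rw [← D.map_swap _ hjk, Equiv.comp_swap_eq_update]
  simp [update_of_ne hjk, update_comm hjk]

theorem map_update_update_eq_repr [Fintype ι] (hjk : j ≠ k) {e f : V} (B : Basis ι K V)
    (hB : ⇑B = update (update w j e) k f) (x y : V) :
    D (update (update w j x) k y) = B.repr x j * D (update (update w j e) k y)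
      + B.repr x k * D (update (update w j f) k y) := by
  have hw : ∀ l, l ≠ j → l ≠ k → D (update (update w k y) j (w l)) = 0 := fun l hlj hlk => by
    simpa [update_of_ne hlk] using D.map_update_self (update w k y) hlj.symm
  set L := D.toMultilinearMap.toLinearMap (update w k y) j
  have hL : ∀ z, D (update (update w j z) k y) = L z := fun z => by simp [L, update_comm hjk]
  calc D (update (update w j x) k y) = L (∑ l, B.repr x l • B l) := by rw [B.sum_repr, hL]
    _ = ∑ l, B.repr x l * L (B l) := by simp only [map_sum, map_smul, smul_eq_mul]
    _ = _ := by
        rw [Fintype.sum_eq_add j k hjk fun l ⟨hlj, hlk⟩ => by simp [L, hB, update_of_ne hlj,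
          update_of_ne hlk, hw l hlj hlk], hL, hL]
        simp [L, hB, update_of_ne hjk]

/-- If `D` does not vanish at `(e, f)` in the slots `j, k`, the family with `e, f` in these slots is
a basis, and expanding in it leaves only the `j`- and `k`-coordinates. -/
theorem exists_map_update_update_eq_rank_two [Fintype ι] (hV : finrank K V = Fintype.card ι)
    (hjk : j ≠ k) : ∃ (s : K) (α β : V → K), ∀ x y,
      D (update (update w j x) k y) = s * (α x * β y - β x * α y) := by
  by_cases h0 : ∀ x y, D (update (update w j x) k y) = 0
  · exact ⟨0, 0, 0, fun x y => by simpa using h0 x y⟩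
  push Not at h0
  obtain ⟨e, f, hef⟩ := h0
  have hli : LinearIndependent K (update (update w j e) k f) :=
    not_not.mp fun h => hef (D.map_linearDependent _ h)
  have : Nonempty ι := ⟨j⟩
  let B := basisOfLinearIndependentOfCardEqFinrank hli hV.symm
  have expand := D.map_update_update_eq_repr w hjk B
    (coe_basisOfLinearIndependentOfCardEqFinrank hli hV.symm)
  refine ⟨D (update (update w j e) k f), fun x => B.repr x j, fun x => B.repr x k,
    fun x y => ?_⟩
  have hey : D (update (update w j e) k y) = B.repr y k * D (update (update w j e) k f) := by
    rw [D.map_update_update_swap w hjk y e, expand y e, D.map_update_update w hjk,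
      D.map_update_update_swap w hjk e f]
    ring
  have hfy : D (update (update w j f) k y) = -(B.repr y j * D (update (update w j e) k f)) := by
    rw [D.map_update_update_swap w hjk y f, expand y f, D.map_update_update w hjk]
    ring
  rw [expand x y, hey, hfy]
  ring

theorem pluecker [Fintype ι] (hV : finrank K V = Fintype.card ι) (hjk : j ≠ k) (a b c d : V) :
    D (update (update w j a) k b) * D (update (update w j c) k d)
      - D (update (update w j a) k c) * D (update (update w j b) k d)
      + D (update (update w j a) k d) * D (update (update w j b) k c) = 0 := by
  obtain ⟨s, α, β, h⟩ := D.exists_map_update_update_eq_rank_two w hV hjk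
  simp only [h]
  ring

end AlternatingMap

theorem ContinuousMultilinearMap.hasDerivAt_apply {𝕜 ι F : Type*} [NontriviallyNormedField 𝕜]
    [Fintype ι] [DecidableEq ι] {E : ι → Type*} [∀ i, NormedAddCommGroup (E i)]
    [∀ i, NormedSpace 𝕜 (E i)] [NormedAddCommGroup F] [NormedSpace 𝕜 F]
    (f : ContinuousMultilinearMap 𝕜 E F) {g : ∀ i, 𝕜 → E i} {g' : ∀ i, E i} {t : 𝕜}
    (hg : ∀ i, HasDerivAt (g i) (g' i) t) :
    HasDerivAt (fun s => f fun i => g i s) (∑ i, f (update (fun j => g j t) i (g' i))) t := by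
  simpa using (HasFDerivAt.multilinear_comp (f := f) fun i => (hg i).hasFDerivAt).hasDerivAt

theorem Matrix.hasDerivAt_detRowAlternating {ι : Type*} [Fintype ι] [DecidableEq ι]
    {g : ι → ℝ → ι → ℝ} {g' : ι → ι → ℝ} {t : ℝ} (hg : ∀ i, HasDerivAt (g i) (g' i) t) :
    HasDerivAt (fun s => detRowAlternating fun i => g i s)
      (∑ i, detRowAlternating (update (fun j => g j t) i (g' i))) t :=
  ContinuousMultilinearMap.hasDerivAt_apply
    ⟨detRowAlternating.toMultilinearMap, by exact continuous_id.matrix_det⟩ hg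

section ShiftDet

variable {N : ℕ}

noncomputable def shiftDet (v : ℤ → Fin N → ℝ) (c : Fin N → ℤ) : ℝ :=
  (Matrix.of fun i j => v (c j) i).det

theorem shiftDet_eq_detRowAlternating (v : ℤ → Fin N → ℝ) (c : Fin N → ℤ) :
    shiftDet v c = Matrix.detRowAlternating (v ∘ c) := by
  rw [shiftDet, ← Matrix.det_transpose]
  rfl

theorem shiftDet_update_eq_zero (v : ℤ → Fin N → ℝ) {c : Fin N → ℤ} {j l : Fin N} {z : ℤ}
    (h : l ≠ j) (hz : c l = z) : shiftDet v (update c j z) = 0 := by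
  rw [shiftDet_eq_detRowAlternating, comp_update, ← hz]
  exact Matrix.detRowAlternating.map_update_self _ h.symm

theorem shiftDet_comp_perm (v : ℤ → Fin N → ℝ) (c : Fin N → ℤ) (σ : Equiv.Perm (Fin N)) :
    shiftDet v (c ∘ σ) = Equiv.Perm.sign σ * shiftDet v c := by
  simp only [shiftDet_eq_detRowAlternating, ← comp_assoc, AlternatingMap.map_perm, Units.smul_def,
    zsmul_eq_mul]

theorem hasDerivAt_shiftDet {ψ : ℤ → ℝ → Fin N → ℝ} {s : ℤ} {β t : ℝ}
    (hψ : ∀ k, HasDerivAt (ψ k) (ψ (k + s) t + β • ψ k t) t) (c : Fin N → ℤ) :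
    HasDerivAt (fun t => shiftDet (ψ · t) c)
      (∑ j, shiftDet (ψ · t) (update c j (c j + s)) + N * β * shiftDet (ψ · t) c) t := by
  have hupd : ∀ j, (fun l => ψ (update c j (c j + s) l) t)
      = update (fun l => ψ (c l) t) j (ψ (c j + s) t) := fun j =>
    funext (apply_update (fun _ k => ψ k t) c j _)
  simp only [shiftDet_eq_detRowAlternating, comp_def]
  convert Matrix.hasDerivAt_detRowAlternating fun j => hψ (c j) using 1
  simp [hupd, AlternatingMap.map_update_add, AlternatingMap.map_update_smul,
    Finset.sum_add_distrib, mul_assoc]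

end ShiftDet

section Border

variable {m : ℕ}

def border (n z w : ℤ) : Fin (m + 2) → ℤ :=
  update (update (fun j => n + (j : ℕ)) 0 z) (Fin.last (m + 1)) w

theorem border_apply (n z w : ℤ) (j : Fin (m + 2)) :
    border n z w j = if j = Fin.last (m + 1) then w else if j = 0 then z else n + (j : ℕ) := by
  simp only [border, update_apply]

theorem border_apply_of_ne {n z w : ℤ} {j : Fin (m + 2)} (h0 : j ≠ 0) (hl : j ≠ Fin.last (m + 1)) :
    border n z w j = n + (j : ℕ) := by
  rw [border_apply, if_neg hl, if_neg h0]

theorem border_self (n : ℤ) : border n n (n + (m + 1)) = fun j : Fin (m + 2) => n + (j : ℕ) := by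
  funext j
  simp only [border_apply, Fin.ext_iff, Fin.val_last, Fin.val_zero]
  split_ifs <;> simp_all

theorem shiftDet_border_pluecker (v : ℤ → Fin (m + 2) → ℝ) (n a b c d : ℤ) :
    shiftDet v (border n a b) * shiftDet v (border n c d)
      - shiftDet v (border n a c) * shiftDet v (border n b d)
      + shiftDet v (border n a d) * shiftDet v (border n b c) = 0 := by
  simp only [shiftDet_eq_detRowAlternating, border, comp_update]
  exact AlternatingMap.pluecker (K := ℝ) Matrix.detRowAlternating _ (by simp) Fin.last_pos'.ne
    _ _ _ _

theorem sum_shiftDet_update_border_sub_one (v : ℤ → Fin (m + 2) → ℝ) (n w : ℤ) :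
    ∑ j, shiftDet v (update (border n n w) j (border n n w j - 1))
      = shiftDet v (border n (n - 1) w) + shiftDet v (border n n (w - 1)) := by
  rw [Fintype.sum_eq_add 0 (Fin.last _) Fin.last_pos'.ne]
  · simp [border, update_comm Fin.last_pos'.ne]
  · rintro j ⟨hj0, hjl⟩
    have hj : 0 < (j : ℕ) := Fin.pos_iff_ne_zero.2 hj0
    have hj' : (j : ℕ) < m + 1 := Fin.val_lt_last hjl
    refine shiftDet_update_eq_zero v (l := ⟨j - 1, by omega⟩) (Fin.ne_of_val_ne (by simp; omega)) ?_
    rw [border_apply, border_apply, if_neg hjl, if_neg hj0]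
    simp only [Fin.ext_iff, Fin.val_last, Fin.val_zero]
    split_ifs <;> simp_all <;> omega

theorem sum_shiftDet_update_border_add_one (v : ℤ → Fin (m + 2) → ℝ) (n z : ℤ) :
    ∑ j, shiftDet v (update (border n z (n + (m + 1))) j (border n z (n + (m + 1)) j + 1))
      = shiftDet v (border n (z + 1) (n + (m + 1)))
        + shiftDet v (border n z (n + (m + 1) + 1)) := by
  rw [Fintype.sum_eq_add 0 (Fin.last _) Fin.last_pos'.ne]
  · simp [border, update_comm Fin.last_pos'.ne]
  · rintro j ⟨hj0, hjl⟩
    have hj : (j : ℕ) < m + 1 := Fin.val_lt_last hjl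
    refine shiftDet_update_eq_zero v (l := ⟨j + 1, by omega⟩) (Fin.ne_of_val_ne (by simp)) ?_
    rw [border_apply, border_apply, if_neg hjl, if_neg hj0]
    simp only [Fin.ext_iff, Fin.val_last, Fin.val_zero]
    split_ifs <;> simp_all <;> omega

theorem shiftDet_border_self_add_eq_zero (v : ℤ → Fin (m + 2) → ℝ) (n : ℤ) :
    shiftDet v (border n n (n + m)) = 0 := by
  refine shiftDet_update_eq_zero v (l := (Fin.last m).castSucc) (Fin.castSucc_lt_last _).ne ?_
  rw [update_apply]
  split_ifs with h <;> simp_all [Fin.ext_iff]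

theorem shiftDet_border_add_one_eq_zero (v : ℤ → Fin (m + 2) → ℝ) (n : ℤ) :
    shiftDet v (border n (n + 1) (n + (m + 1))) = 0 := by
  rw [border, update_comm Fin.last_pos'.ne]
  refine shiftDet_update_eq_zero v (l := 1) (by simp) ?_
  rw [update_apply]
  split_ifs with h <;> simp_all [Fin.ext_iff]

theorem shiftDet_border_sub_one_self (v : ℤ → Fin (m + 2) → ℝ) (n : ℤ) :
    shiftDet v (border n (n - 1) n) = (-1) ^ m * shiftDet v fun j => n - 1 + (j : ℕ) := by
  have h1 : (1 : Fin (m + 2)) ≤ Fin.last (m + 1) := Fin.le_last _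
  have hσ : border n (n - 1) n = (fun j : Fin (m + 2) => n - 1 + (j : ℕ)) ∘
      Fin.cycleIcc 1 (Fin.last (m + 1)) := by
    funext j
    rcases eq_or_ne j 0 with rfl | h0
    · simp [border_apply, Fin.cycleIcc_of_lt]
    rcases eq_or_ne j (Fin.last _) with rfl | hl
    · simp [border_apply, Fin.cycleIcc_of_last h1]
    have hlt := Fin.lt_last_iff_ne_last.2 hl
    rw [comp_apply, Fin.cycleIcc_of_ge_of_lt (Fin.one_le_of_ne_zero h0) hlt,
      Fin.val_add_one_of_lt hlt, border_apply_of_ne h0 hl]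
    push_cast
    ring
  rw [hσ, shiftDet_comp_perm, Fin.sign_cycleIcc_of_le h1]
  simp

theorem shiftDet_consecutive_add_one (v : ℤ → Fin (m + 2) → ℝ) (n : ℤ) :
    (shiftDet v fun j => n + 1 + (j : ℕ))
      = (-1) ^ m * shiftDet v (border n (n + (m + 1)) (n + (m + 1) + 1)) := by
  have hσ : (fun j : Fin (m + 2) => n + 1 + (j : ℕ))
      = border n (n + (m + 1)) (n + (m + 1) + 1) ∘ Fin.cycleRange (Fin.last m).castSucc := by
    funext j
    rcases lt_trichotomy j (Fin.last m).castSucc with h | rfl | h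
    · have hlt : j < Fin.last (m + 1) := h.trans (Fin.castSucc_lt_last _)
      have hval := Fin.val_add_one_of_lt hlt
      have hm : (j : ℕ) < m := h
      rw [comp_apply, Fin.cycleRange_of_lt h, border_apply_of_ne (Fin.ne_of_val_ne (by simp [hval]))
        (Fin.ne_of_val_ne (by simp [hval]; omega)), hval]
      push_cast
      ring
    · simp [border_apply]
      ring
    · rw [comp_apply, Fin.cycleRange_of_gt h]
      rw [Fin.castSucc_lt_iff_succ_le, Fin.succ_last, Fin.last_le_iff] at h
      subst h
      simp [border_apply]
      ring
  rw [hσ, shiftDet_comp_perm, Fin.sign_cycleRange]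
  simp

end Border

section Toda

variable {N : ℕ}

noncomputable def casoratian (φ : ℤ → ℝ → ℝ → Fin N → ℝ) (n : ℤ) (x y : ℝ) : ℝ :=
  shiftDet (φ · x y) fun j => n + (j : ℕ)

theorem hasDerivAt_shiftDet_fst {φ : ℤ → ℝ → ℝ → Fin N → ℝ}
    (hx : ∀ k x y, HasDerivAt (φ k · y) (φ (k - 1) x y) x) (c : Fin N → ℤ) (x y : ℝ) :
    HasDerivAt (fun x => shiftDet (φ · x y) c)
      (∑ j, shiftDet (φ · x y) (update c j (c j - 1))) x := by
  simpa [sub_eq_add_neg] using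
    hasDerivAt_shiftDet (s := -1) (β := 0) (fun k => by simpa [sub_eq_add_neg] using hx k x y) c

theorem hasDerivAt_shiftDet_snd {φ : ℤ → ℝ → ℝ → Fin N → ℝ} {b : ℝ}
    (hy : ∀ k x y, HasDerivAt (φ k x ·) (φ (k + 1) x y + b • φ k x y) y) (c : Fin N → ℤ)
    (x y : ℝ) :
    HasDerivAt (fun y => shiftDet (φ · x y) c)
      (∑ j, shiftDet (φ · x y) (update c j (c j + 1)) + N * b * shiftDet (φ · x y) c) y :=
  hasDerivAt_shiftDet (hy · x y) c

theorem casoratian_toda_fin_one {φ : ℤ → ℝ → ℝ → Fin 1 → ℝ} {b : ℝ}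
    (hx : ∀ k x y, HasDerivAt (φ k · y) (φ (k - 1) x y) x)
    (hy : ∀ k x y, HasDerivAt (φ k x ·) (φ (k + 1) x y + b • φ k x y) y) (n : ℤ) (x y : ℝ) :
    casoratian φ n x y * deriv (fun x => deriv (casoratian φ n x) y) x
        - deriv (casoratian φ n · y) x * deriv (casoratian φ n x) y - casoratian φ n x y ^ 2
      = -(casoratian φ (n - 1) x y * casoratian φ (n + 1) x y) := by
  have hτ : casoratian φ = fun k x y => φ k x y 0 := by
    funext k x y
    simp [casoratian, shiftDet, Matrix.det_unique]
  have hτx : ∀ k x y, HasDerivAt (casoratian φ k · y) (casoratian φ (k - 1) x y) x := by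
    simpa [hτ] using fun k x y => hasDerivAt_pi.1 (hx k x y) 0
  have hτy : ∀ k x y, HasDerivAt (casoratian φ k x ·)
      (casoratian φ (k + 1) x y + b * casoratian φ k x y) y := by
    simpa [hτ] using fun k x y => hasDerivAt_pi.1 (hy k x y) 0
  have hτxy : deriv (fun x => deriv (casoratian φ n x) y) x
      = casoratian φ n x y + b * casoratian φ (n - 1) x y := by
    simp_rw [fun x => (hτy n x y).deriv]
    simpa using ((hτx (n + 1) x y).fun_add ((hτx n x y).const_mul b)).deriv
  rw [hτxy, (hτx n x y).deriv, (hτy n x y).deriv]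
  ring

theorem casoratian_toda_fin_add_two {m : ℕ} {φ : ℤ → ℝ → ℝ → Fin (m + 2) → ℝ} {b : ℝ}
    (hx : ∀ k x y, HasDerivAt (φ k · y) (φ (k - 1) x y) x)
    (hy : ∀ k x y, HasDerivAt (φ k x ·) (φ (k + 1) x y + b • φ k x y) y) (n : ℤ) (x y : ℝ) :
    casoratian φ n x y * deriv (fun x => deriv (casoratian φ n x) y) x
        - deriv (casoratian φ n · y) x * deriv (casoratian φ n x) y - casoratian φ n x y ^ 2
      = -(casoratian φ (n - 1) x y * casoratian φ (n + 1) x y) := by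
  set ω : ℤ → ℤ → ℝ → ℝ → ℝ := fun z w x y => shiftDet (φ · x y) (border n z w) with hω
  have hτ : casoratian φ n = ω n (n + (m + 1)) := by
    funext x y
    simp only [hω, border_self]
    rfl
  have hτx : ∀ x y, HasDerivAt (ω n (n + (m + 1)) · y) (ω (n - 1) (n + (m + 1)) x y) x := by
    intro x y
    convert hasDerivAt_shiftDet_fst hx _ x y using 1
    rw [sum_shiftDet_update_border_sub_one, show n + ((m : ℤ) + 1) - 1 = n + m by ring,
      shiftDet_border_self_add_eq_zero, add_zero]
  have hτy : ∀ x y, HasDerivAt (ω n (n + (m + 1)) x ·)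
      (ω n (n + (m + 1) + 1) x y + (m + 2) * b * ω n (n + (m + 1)) x y) y := by
    intro x y
    convert hasDerivAt_shiftDet_snd hy _ x y using 1
    rw [sum_shiftDet_update_border_add_one, shiftDet_border_add_one_eq_zero, zero_add]
    push_cast
    ring
  have hωx : HasDerivAt (ω n (n + (m + 1) + 1) · y)
      (ω (n - 1) (n + (m + 1) + 1) x y + ω n (n + (m + 1)) x y) x := by
    convert hasDerivAt_shiftDet_fst hx _ x y using 1
    rw [sum_shiftDet_update_border_sub_one, add_sub_cancel_right]
  have hτxy : deriv (fun x => deriv (ω n (n + (m + 1)) x) y) x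
      = ω (n - 1) (n + (m + 1) + 1) x y + ω n (n + (m + 1)) x y
        + (m + 2) * b * ω (n - 1) (n + (m + 1)) x y := by
    simp_rw [fun x => (hτy x y).deriv]
    exact (hωx.fun_add ((hτx x y).const_mul _)).deriv
  have hprod : casoratian φ (n - 1) x y * casoratian φ (n + 1) x y
      = ω (n - 1) n x y * ω (n + (m + 1)) (n + (m + 1) + 1) x y := by
    simp only [casoratian, hω, shiftDet_consecutive_add_one, shiftDet_border_sub_one_self]
    ring
  rw [hprod, hτ, hτxy, (hτx x y).deriv, (hτy x y).deriv]
  linear_combination shiftDet_border_pluecker (φ · x y) n (n - 1) n (n + (m + 1)) (n + (m + 1) + 1)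

theorem casoratian_toda {φ : ℤ → ℝ → ℝ → Fin N → ℝ} {b : ℝ}
    (hx : ∀ k x y, HasDerivAt (φ k · y) (φ (k - 1) x y) x)
    (hy : ∀ k x y, HasDerivAt (φ k x ·) (φ (k + 1) x y + b • φ k x y) y) (n : ℤ) (x y : ℝ) :
    casoratian φ n x y * deriv (fun x => deriv (casoratian φ n x) y) x
        - deriv (casoratian φ n · y) x * deriv (casoratian φ n x) y - casoratian φ n x y ^ 2
      = -(casoratian φ (n - 1) x y * casoratian φ (n + 1) x y) := by
  rcases N with _ | _ | m
  · have h1 : ∀ k, casoratian φ k = fun _ _ => 1 := fun _ => funext₂ fun _ _ => Matrix.det_isEmpty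
    simp [h1]
  · exact casoratian_toda_fin_one hx hy n x y
  · exact casoratian_toda_fin_add_two hx hy n x y

end Toda

noncomputable def planeWave (b κ c : ℝ) (k : ℤ) (x1 x2 xm1 xm2 : ℝ) : ℝ :=
  (κ - b) ^ k * Real.exp (x1 / (κ - b) + x2 / (κ - b) ^ 2 + κ * xm1 + κ ^ 2 * xm2 + c)

theorem hasDerivAt_planeWave_x1 {b κ : ℝ} (hκ : κ ≠ b) (c : ℝ) (k : ℤ) (x1 x2 xm1 xm2 : ℝ) :
    HasDerivAt (planeWave b κ c k · x2 xm1 xm2) (planeWave b κ c (k - 1) x1 x2 xm1 xm2) x1 := by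
  refine HasDerivAt.congr_deriv ((((((hasDerivAt_id' x1).div_const (κ - b)).add_const
    (x2 / (κ - b) ^ 2)).add_const (κ * xm1)).add_const (κ ^ 2 * xm2)).add_const c
    |>.exp.const_mul ((κ - b) ^ k)) ?_
  rw [planeWave, zpow_sub_one₀ (sub_ne_zero.2 hκ)]
  ring

theorem hasDerivAt_planeWave_xm1 {b κ : ℝ} (hκ : κ ≠ b) (c : ℝ) (k : ℤ) (x1 x2 xm1 xm2 : ℝ) :
    HasDerivAt (planeWave b κ c k x1 x2 · xm2)
      (planeWave b κ c (k + 1) x1 x2 xm1 xm2 + b * planeWave b κ c k x1 x2 xm1 xm2) xm1 := by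
  refine HasDerivAt.congr_deriv (((((hasDerivAt_id' xm1).const_mul κ).const_add
    (x1 / (κ - b) + x2 / (κ - b) ^ 2)).add_const (κ ^ 2 * xm2)).add_const c
    |>.exp.const_mul ((κ - b) ^ k)) ?_
  rw [planeWave, planeWave, zpow_add_one₀ (sub_ne_zero.2 hκ)]
  ring

theorem psi_eq_planeWave {N : ℕ} (b : ℝ) (p q a1 a2 ξ0 η0 : Fin N → ℝ) (i : Fin N) (k : ℤ)
    (x1 x2 xm1 xm2 : ℝ) :
    psi b p q a1 a2 ξ0 η0 i k x1 x2 xm1 xm2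
      = a1 i * planeWave b (p i)⁻¹ (ξ0 i) k x1 x2 xm1 xm2
        + a2 i * planeWave b (q i)⁻¹ (η0 i) k x1 x2 xm1 xm2 := by
  simp only [psi, planeWave, mul_assoc]

section Psi

variable {N : ℕ} {b : ℝ} {p q : Fin N → ℝ} (a1 a2 ξ0 η0 : Fin N → ℝ)

theorem hasDerivAt_psi_x1 (hpb : ∀ i, (p i)⁻¹ ≠ b) (hqb : ∀ i, (q i)⁻¹ ≠ b) (i : Fin N) (k : ℤ)
    (x1 x2 xm1 xm2 : ℝ) :
    HasDerivAt (psi b p q a1 a2 ξ0 η0 i k · x2 xm1 xm2)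
      (psi b p q a1 a2 ξ0 η0 i (k - 1) x1 x2 xm1 xm2) x1 := by
  simp only [psi_eq_planeWave]
  exact ((hasDerivAt_planeWave_x1 (hpb i) _ k x1 x2 xm1 xm2).const_mul _).fun_add
    ((hasDerivAt_planeWave_x1 (hqb i) _ k x1 x2 xm1 xm2).const_mul _)

theorem hasDerivAt_psi_xm1 (hpb : ∀ i, (p i)⁻¹ ≠ b) (hqb : ∀ i, (q i)⁻¹ ≠ b) (i : Fin N) (k : ℤ)
    (x1 x2 xm1 xm2 : ℝ) :
    HasDerivAt (psi b p q a1 a2 ξ0 η0 i k x1 x2 · xm2)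
      (psi b p q a1 a2 ξ0 η0 i (k + 1) x1 x2 xm1 xm2
        + b * psi b p q a1 a2 ξ0 η0 i k x1 x2 xm1 xm2) xm1 := by
  simp only [psi_eq_planeWave]
  refine (((hasDerivAt_planeWave_xm1 (hpb i) _ k x1 x2 xm1 xm2).const_mul (a1 i)).fun_add
    ((hasDerivAt_planeWave_xm1 (hqb i) _ k x1 x2 xm1 xm2).const_mul (a2 i))).congr_deriv ?_
  ring

end Psi

theorem tau_bilinear_Toda_general {N : ℕ} (b : ℝ)
    (p q a1 a2 ξ0 η0 : Fin N → ℝ)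
    (hpb : ∀ i, (p i)⁻¹ ≠ b) (hqb : ∀ i, (q i)⁻¹ ≠ b) :
    ∀ (n : ℤ) (x1 x2 xm1 xm2 : ℝ),
      tau b p q a1 a2 ξ0 η0 n x1 x2 xm1 xm2
          * pd1 (pdm1 (tau b p q a1 a2 ξ0 η0 n)) x1 x2 xm1 xm2
        - pd1 (tau b p q a1 a2 ξ0 η0 n) x1 x2 xm1 xm2
          * pdm1 (tau b p q a1 a2 ξ0 η0 n) x1 x2 xm1 xm2
        - (tau b p q a1 a2 ξ0 η0 n x1 x2 xm1 xm2) ^ 2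
      = -(tau b p q a1 a2 ξ0 η0 (n - 1) x1 x2 xm1 xm2
          * tau b p q a1 a2 ξ0 η0 (n + 1) x1 x2 xm1 xm2) := by
  intro n x1 x2 xm1 xm2
  exact casoratian_toda (φ := fun k x y i => psi b p q a1 a2 ξ0 η0 i k x x2 y xm2) (b := b)
    (fun k x y => hasDerivAt_pi.2 fun i => hasDerivAt_psi_x1 a1 a2 ξ0 η0 hpb hqb i k x x2 y xm2)
    (fun k x y => hasDerivAt_pi.2 fun i => hasDerivAt_psi_xm1 a1 a2 ξ0 η0 hpb hqb i k x x2 y xm2)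
    n x1 xm1

/-- the Casoratian τ_n satisfies the bilinear 2D Toda equation
(½D_{x₁}D_{x₋₁} − 1)τ_n·τ_n = −τ_{n−1}τ_{n+1}. -/
theorem tau_bilinear_Toda {N : ℕ} (hN : 1 ≤ N) (b : ℝ)
    (p q a1 a2 ξ0 η0 : Fin N → ℝ)
    (hp : ∀ i, p i ≠ 0) (hq : ∀ i, q i ≠ 0)
    (hpb : ∀ i, (p i)⁻¹ ≠ b) (hqb : ∀ i, (q i)⁻¹ ≠ b) :
    ∀ (n : ℤ) (x1 x2 xm1 xm2 : ℝ),
      tau b p q a1 a2 ξ0 η0 n x1 x2 xm1 xm2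
          * pd1 (pdm1 (tau b p q a1 a2 ξ0 η0 n)) x1 x2 xm1 xm2
        - pd1 (tau b p q a1 a2 ξ0 η0 n) x1 x2 xm1 xm2
          * pdm1 (tau b p q a1 a2 ξ0 η0 n) x1 x2 xm1 xm2
        - (tau b p q a1 a2 ξ0 η0 n x1 x2 xm1 xm2) ^ 2
      = -(tau b p q a1 a2 ξ0 η0 (n - 1) x1 x2 xm1 xm2
          * tau b p q a1 a2 ξ0 η0 (n + 1) x1 x2 xm1 xm2) :=
  tau_bilinear_Toda_general b p q a1 a2 ξ0 η0 hpb hqb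
end

section
/- Fix N ≥ 1, b ∈ ℝ, nonzero reals p_i, q_i with p_i⁻¹ ≠ b, q_i⁻¹ ≠ b, constants a_{i,1}, a_{i,2}, ξ_{i0}, η_{i0} ∈ ℝ, and let τ_n be the associated Casoratian. Then for every n ∈ ℤ, ∂_{x₁}τ_n equals the determinant of the N×N matrix whose first column is (ψ_i^{(n−1)})_{i=1..N} and whose j-th column, for 2 ≤ j ≤ N, is (ψ_i^{(n+j−1)})_{i=1..N}; that is, ∂_{x₁}τ_n = det[ψ^{(n−1)}, ψ^{(n+1)}, ψ^{(n+2)}, …, ψ^{(n+N−1)}]. -/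
/-!
Each ψ_i^{(n)} is a combination of exponentials `exp (x₁ / A)` weighted by `A ^ n`, so
`∂_{x₁} ψ_i^{(n)} = ψ_i^{(n-1)}`. Differentiating the Casoratian column by column, the
derivative of column `j ≥ 1` reproduces column `j - 1`, so only the term in which the first
column is differentiated survives.
-/

open Matrix Finset

theorem Matrix.hasDerivAt_det {𝕜 𝔸 ι : Type*} [NontriviallyNormedField 𝕜] [NormedCommRing 𝔸]
    [NormedAlgebra 𝕜 𝔸] [Fintype ι] [DecidableEq ι] {M : 𝕜 → Matrix ι ι 𝔸}
    {M' : Matrix ι ι 𝔸} {x : 𝕜} (h : ∀ i j, HasDerivAt (fun t => M t i j) (M' i j) x) :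
    HasDerivAt (fun t => (M t).det) (∑ j, ((M x).updateCol j fun i => M' i j).det) x := by
  simp only [det_apply']
  have hterm (σ : Equiv.Perm ι) :
      HasDerivAt (fun t => (Equiv.Perm.sign σ : 𝔸) * ∏ i, M t (σ i) i)
        ((Equiv.Perm.sign σ : 𝔸) * ∑ k, (∏ i ∈ univ.erase k, M x (σ i) i) • M' (σ k) k) x :=
    (HasDerivAt.fun_finsetProd fun i _ => h (σ i) i).const_mul _
  refine (HasDerivAt.fun_sum fun σ _ => hterm σ).congr_deriv ?_
  rw [sum_comm]
  refine sum_congr rfl fun σ _ => ?_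
  rw [mul_sum]
  refine sum_congr rfl fun k _ => ?_
  rw [← mul_prod_erase univ _ (mem_univ k), updateCol_self,
    prod_congr rfl fun i hi => updateCol_ne (ne_of_mem_erase hi), smul_eq_mul]
  ring

theorem Matrix.sum_det_updateCol_shift_pred {R : Type*} [CommRing R] {N : ℕ} (hN : 1 ≤ N)
    (f : Fin N → ℤ → R) (n : ℤ) :
    ∑ j : Fin N, ((of fun i j : Fin N => f i (n + (j : ℕ))).updateCol j
        fun i => f i (n + (j : ℕ) - 1)).det
      = (of fun i j : Fin N => f i (if (j : ℕ) = 0 then n - 1 else n + (j : ℕ))).det := by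
  rw [sum_eq_single_of_mem (⟨0, hN⟩ : Fin N) (mem_univ _)]
  · congr 1
    ext i j
    simp only [updateCol_apply, of_apply, Fin.ext_iff]
    split_ifs <;> simp_all
  · intro k _ hk
    have hk0 : (k : ℕ) ≠ 0 := fun h => hk (Fin.ext h)
    refine det_zero_of_column_eq (i := ⟨k - 1, by omega⟩) (j := k)
      (fun h => by simp [Fin.ext_iff] at h; omega) fun i => ?_
    rw [updateCol_self, updateCol_ne (by simp [Fin.ext_iff]; omega), of_apply]
    congr 1
    push_cast [Nat.cast_sub (Nat.one_le_iff_ne_zero.mpr hk0)]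
    ring

theorem hasDerivAt_zpow_mul_exp_div_add {A : ℝ} (hA : A ≠ 0) (c d : ℝ) (n : ℤ) (x : ℝ) :
    HasDerivAt (fun t => c * A ^ n * Real.exp (t / A + d))
      (c * A ^ (n - 1) * Real.exp (x / A + d)) x := by
  have h := (((hasDerivAt_id x).div_const A).add_const d).exp.const_mul (c * A ^ n)
  refine h.congr_deriv ?_
  rw [zpow_sub_one₀ hA, id]
  ring

theorem psi_hasDerivAt_x1 {N : ℕ} {b : ℝ} {p q : Fin N → ℝ} (a1 a2 ξ0 η0 : Fin N → ℝ)
    {i : Fin N} (hpb : (p i)⁻¹ ≠ b) (hqb : (q i)⁻¹ ≠ b) (n : ℤ) (x1 x2 xm1 xm2 : ℝ) :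
    HasDerivAt (fun t => psi b p q a1 a2 ξ0 η0 i n t x2 xm1 xm2)
      (psi b p q a1 a2 ξ0 η0 i (n - 1) x1 x2 xm1 xm2) x1 := by
  have hp := hasDerivAt_zpow_mul_exp_div_add (sub_ne_zero.mpr hpb) (a1 i)
    (x2 / ((p i)⁻¹ - b) ^ 2 + (p i)⁻¹ * xm1 + (p i)⁻¹ ^ 2 * xm2 + ξ0 i) n x1
  have hq := hasDerivAt_zpow_mul_exp_div_add (sub_ne_zero.mpr hqb) (a2 i)
    (x2 / ((q i)⁻¹ - b) ^ 2 + (q i)⁻¹ * xm1 + (q i)⁻¹ ^ 2 * xm2 + η0 i) n x1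
  simpa only [psi, add_assoc] using hp.fun_add hq

theorem tau_x1_deriv_general {N : ℕ} (hN : 1 ≤ N) (b : ℝ)
    (p q a1 a2 ξ0 η0 : Fin N → ℝ)
    (hpb : ∀ i, (p i)⁻¹ ≠ b) (hqb : ∀ i, (q i)⁻¹ ≠ b) :
    ∀ (n : ℤ) (x1 x2 xm1 xm2 : ℝ),
      pd1 (tau b p q a1 a2 ξ0 η0 n) x1 x2 xm1 xm2
      = Matrix.det (Matrix.of fun i j : Fin N =>
          psi b p q a1 a2 ξ0 η0 i
            (if (j : ℕ) = 0 then n - 1 else n + (j : ℕ)) x1 x2 xm1 xm2) := by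
  intro n x1 x2 xm1 xm2
  have hentries (i j : Fin N) :
      HasDerivAt (fun t => psi b p q a1 a2 ξ0 η0 i (n + (j : ℕ)) t x2 xm1 xm2)
        (psi b p q a1 a2 ξ0 η0 i (n + (j : ℕ) - 1) x1 x2 xm1 xm2) x1 :=
    psi_hasDerivAt_x1 a1 a2 ξ0 η0 (hpb i) (hqb i) _ x1 x2 xm1 xm2
  exact (Matrix.hasDerivAt_det (M' := of fun i j : Fin N =>
    psi b p q a1 a2 ξ0 η0 i (n + (j : ℕ) - 1) x1 x2 xm1 xm2) hentries).deriv.trans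
    (sum_det_updateCol_shift_pred hN (fun i m => psi b p q a1 a2 ξ0 η0 i m x1 x2 xm1 xm2) n)

/-- ∂_{x₁}τ_n = |n−1, n+1, n+2, …, n+N−1|. -/
theorem tau_x1_deriv {N : ℕ} (hN : 1 ≤ N) (b : ℝ)
    (p q a1 a2 ξ0 η0 : Fin N → ℝ)
    (hp : ∀ i, p i ≠ 0) (hq : ∀ i, q i ≠ 0)
    (hpb : ∀ i, (p i)⁻¹ ≠ b) (hqb : ∀ i, (q i)⁻¹ ≠ b) :
    ∀ (n : ℤ) (x1 x2 xm1 xm2 : ℝ),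
      pd1 (tau b p q a1 a2 ξ0 η0 n) x1 x2 xm1 xm2
      = Matrix.det (Matrix.of fun i j : Fin N =>
          psi b p q a1 a2 ξ0 η0 i
            (if (j : ℕ) = 0 then n - 1 else n + (j : ℕ)) x1 x2 xm1 xm2) :=
  tau_x1_deriv_general hN b p q a1 a2 ξ0 η0 hpb hqb
end

section
/- Fix N ≥ 1, b ∈ ℝ, nonzero reals p_i with p_i⁻¹ ≠ b and −p_i⁻¹ ≠ b, constants a_{i,1}, a_{i,2}, ξ_{i0}, η_{i0} ∈ ℝ, and impose the period-2 reduction q_i = −p_i for all i. Let τ_n be the associated Casoratian. Then for every n ∈ ℤ, on all of ℝ⁴: ∂_{x₋₂}τ_n = (Σ_{i=1}^{N} p_i⁻²) · τ_n; in particular ∂_{x₋₂}τ_n is a constant multiple of τ_n with the same constant for all n. -/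
/-!
With `q i = -p i` both exponentials in `ψ_i` carry the same `x₋₂`-dependence `exp (p_i⁻² x₋₂)`,
so it factors out of row `i` of the Casoratian matrix. Hence `τ_n` is
`exp ((∑ p_i⁻²) x₋₂)` times its value at `x₋₂ = 0`, and differentiating in `x₋₂` gives the claim.
-/

open Real

theorem hasDerivAt_of_forall_eq_exp_mul {f : ℝ → ℝ} {c : ℝ}
    (hf : ∀ t, f t = exp (c * t) * f 0) (x : ℝ) : HasDerivAt f (c * f x) x := by
  rw [hf x, ← mul_assoc, mul_comm c]
  exact ((hasDerivAt_const_mul c).exp.mul_const (f 0)).congr_of_eventuallyEq (.of_forall hf)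

lemma psi_eq_exp_mul_psi_zero {N : ℕ} (b : ℝ) (p q a1 a2 ξ0 η0 : Fin N → ℝ)
    (hq : ∀ i, q i = -p i) (i : Fin N) (m : ℤ) (x1 x2 xm1 t : ℝ) :
    psi b p q a1 a2 ξ0 η0 i m x1 x2 xm1 t
      = exp ((p i)⁻¹ ^ 2 * t) * psi b p q a1 a2 ξ0 η0 i m x1 x2 xm1 0 := by
  have shift (u v : ℝ) : exp (u + (p i)⁻¹ ^ 2 * t + v)
      = exp ((p i)⁻¹ ^ 2 * t) * exp (u + (p i)⁻¹ ^ 2 * 0 + v) := by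
    rw [← exp_add]
    ring_nf
  simp only [psi, hq i, inv_neg, neg_sq, shift]
  ring

lemma tau_eq_exp_mul_tau_zero {N : ℕ} (b : ℝ) (p q a1 a2 ξ0 η0 : Fin N → ℝ)
    (hq : ∀ i, q i = -p i) (n : ℤ) (x1 x2 xm1 t : ℝ) :
    tau b p q a1 a2 ξ0 η0 n x1 x2 xm1 t
      = exp ((∑ i, (p i)⁻¹ ^ 2) * t) * tau b p q a1 a2 ξ0 η0 n x1 x2 xm1 0 := by
  simp only [tau, psi_eq_exp_mul_psi_zero b p q a1 a2 ξ0 η0 hq _ _ x1 x2 xm1 t]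
  refine (Matrix.det_mul_column _ _).trans ?_
  rw [Finset.sum_mul, exp_sum]
  rfl

theorem tau_period_two_eigen_general {N : ℕ} (b : ℝ)
    (p q a1 a2 ξ0 η0 : Fin N → ℝ)
    (hq : ∀ i, q i = -p i) :
    ∀ (n : ℤ) (x1 x2 xm1 xm2 : ℝ),
      pdm2 (tau b p q a1 a2 ξ0 η0 n) x1 x2 xm1 xm2
      = (∑ i : Fin N, ((p i)⁻¹) ^ 2) * tau b p q a1 a2 ξ0 η0 n x1 x2 xm1 xm2 :=
  fun n x1 x2 xm1 xm2 => (hasDerivAt_of_forall_eq_exp_mul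
      (tau_eq_exp_mul_tau_zero b p q a1 a2 ξ0 η0 hq n x1 x2 xm1) xm2).deriv

/-- under the period-2 reduction q_i = −p_i, the Casoratian
satisfies ∂_{x₋₂}τ_n = (Σ p_i⁻²)·τ_n, the same constant for all n. -/
theorem tau_period_two_eigen {N : ℕ} (hN : 1 ≤ N) (b : ℝ)
    (p q a1 a2 ξ0 η0 : Fin N → ℝ)
    (hp : ∀ i, p i ≠ 0)
    (hpb : ∀ i, (p i)⁻¹ ≠ b) (hpb' : ∀ i, -(p i)⁻¹ ≠ b)
    (hq : ∀ i, q i = -p i) :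
    ∀ (n : ℤ) (x1 x2 xm1 xm2 : ℝ),
      pdm2 (tau b p q a1 a2 ξ0 η0 n) x1 x2 xm1 xm2
      = (∑ i : Fin N, ((p i)⁻¹) ^ 2) * tau b p q a1 a2 ξ0 η0 n x1 x2 xm1 xm2 :=
  tau_period_two_eigen_general b p q a1 a2 ξ0 η0 hq
end

section
/- Let σ > 0 and c > 0 with c ≠ 1. Set k = (c² − 1)/(√σ·c), ω = √σ(1 − c)/(1 + c), and d = 1/c, and define g(y,s) = 1 + e^{ky+ωs}, f(y,s) = 1 + c·e^{ky+ωs}, h(y,s) = 1 + d·e^{ky+ωs}. Then f, g, h satisfy the bilinear system (B1)–(B3) on all of ℝ². -/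
lemma pds_aux (k ω a b : ℝ) :
    pds (fun y s => b + a * Real.exp (k * y + ω * s))
      = fun y s => a * ω * Real.exp (k * y + ω * s) := by
  funext y s
  have h1 : HasDerivAt (fun s' : ℝ => k * y + ω * s') ω s := by
    simpa using ((hasDerivAt_id s).const_mul ω).const_add (k * y)
  have h2 : HasDerivAt (fun s' : ℝ => b + a * Real.exp (k * y + ω * s'))
      (a * (Real.exp (k * y + ω * s) * ω)) s := ((h1.exp).const_mul a).const_add b
  simp [pds, h2.deriv]; ring

lemma pdy_aux (k ω a b : ℝ) :
    pdy (fun y s => b + a * Real.exp (k * y + ω * s))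
      = fun y s => a * k * Real.exp (k * y + ω * s) := by
  funext y s
  have h1 : HasDerivAt (fun y' : ℝ => k * y' + ω * s) k y := by
    simpa using ((hasDerivAt_id y).const_mul k).add_const (ω * s)
  have h2 : HasDerivAt (fun y' : ℝ => b + a * Real.exp (k * y' + ω * s))
      (a * (Real.exp (k * y + ω * s) * k)) y := ((h1.exp).const_mul a).const_add b
  simp [pdy, h2.deriv]; ring

lemma pdy_aux' (k ω b : ℝ) :
    pdy (fun y s => b * Real.exp (k * y + ω * s))
      = fun y s => b * k * Real.exp (k * y + ω * s) := by
  have := pdy_aux k ω b 0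
  simpa using this

/-- the one-soliton tau functions satisfy the bilinear
system (B1)-(B3) of the two-component Hunter-Saxton equation. -/
theorem one_soliton_bilinear (σ c : ℝ) (hσ : 0 < σ) (hc : 0 < c) (hc1 : c ≠ 1)
    (k ω d : ℝ)
    (hk : k = (c ^ 2 - 1) / (Real.sqrt σ * c))
    (hω : ω = Real.sqrt σ * (1 - c) / (1 + c))
    (hd : d = 1 / c)
    (f g h : ℝ → ℝ → ℝ)
    (hgdef : g = fun y s => 1 + Real.exp (k * y + ω * s))
    (hfdef : f = fun y s => 1 + c * Real.exp (k * y + ω * s))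
    (hhdef : h = fun y s => 1 + d * Real.exp (k * y + ω * s)) :
    (∀ y s, g y s * pdy (pds g) y s - pdy g y s * pds g y s - (g y s) ^ 2
      = -(f y s * h y s)) ∧
    (∀ y s, (Real.sqrt σ)⁻¹ * (pds f y s * h y s - f y s * pds h y s)
      + f y s * h y s = (g y s) ^ 2) ∧
    (∀ y s, (pdy (pds f) y s * h y s - pdy f y s * pds h y s
        - pds f y s * pdy h y s + f y s * pdy (pds h) y s)
      + 2 / Real.sqrt σ * (pds f y s * h y s - f y s * pds h y s)
      + Real.sqrt σ * (pdy f y s * h y s - f y s * pdy h y s) = 0) := by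
  have hg' : g = fun y s => 1 + 1 * Real.exp (k * y + ω * s) := by simp [hgdef]
  have hs0 : Real.sqrt σ ≠ 0 := ne_of_gt (Real.sqrt_pos.mpr hσ)
  have hc0 : c ≠ 0 := ne_of_gt hc
  have h1c : (1 : ℝ) + c ≠ 0 := by positivity
  subst hg' hfdef hhdef
  rw [pds_aux, pds_aux, pds_aux, pdy_aux, pdy_aux, pdy_aux, pdy_aux', pdy_aux', pdy_aux']
  refine ⟨fun y s => ?_, fun y s => ?_, fun y s => ?_⟩ <;>
    · subst hk hω hd
      field_simp
      ring
end

section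
/- Let σ > 0 and c > 0 with c ≠ 1. Set k = (c² − 1)/(√σ·c), v = σc/(1 + c)², and θ(y,s) = k(y − v·s). Then for all (y,s) ∈ ℝ²: (i) −∂ₛ²( log(1 + e^{θ(y,s)}) ) = −(σ/4)·((1 − c)/(1 + c))² · sech²(θ(y,s)/2), and (ii) (1 + e^{θ(y,s)})² / ( (1 + c·e^{θ(y,s)})(1 + c⁻¹·e^{θ(y,s)}) ) = ( 1 + ((1 − c)²/(4c))·sech²(θ(y,s)/2) )⁻¹. (These are the explicit one-soliton profiles u and ρ of the two-component Hunter–Saxton equation in hodograph coordinates; note k(y − vs) = ky + ωs with ω = √σ(1−c)/(1+c).) -/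
/-! In the travelling coordinate `x = θ(y, s) = k y - k v s` the profile `u` is `-(k v)²` times the
second derivative of the softplus function `log (1 + eˣ)`, which is `sech² (x/2) / 4`, and
`-k v = ω = √σ (1 - c)/(1 + c)`. The profile `ρ` rests on the factorisation
`(1 + c eˣ)(1 + c⁻¹ eˣ) = (1 + eˣ)² + ((1 - c)²/c) eˣ` together with `sech² (x/2) = 4 eˣ/(1 + eˣ)²`. -/

/-- The hyperbolic secant, sech x = 2/(eˣ + e⁻ˣ) = 1/cosh x. -/
noncomputable def sech (x : ℝ) : ℝ := 1 / Real.cosh x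

open Real

lemma sech_half_sq (x : ℝ) : sech (x / 2) ^ 2 = 4 * exp x / (1 + exp x) ^ 2 := by
  have hexp : exp x = exp (x / 2) ^ 2 := by rw [← exp_nat_mul]; ring_nf
  rw [sech, cosh_eq, exp_neg, hexp]
  field_simp
  ring

lemma hasDerivAt_log_one_add_exp (x : ℝ) :
    HasDerivAt (fun x => log (1 + exp x)) (exp x / (1 + exp x)) x :=
  ((hasDerivAt_exp x).const_add 1).log (by positivity)

lemma hasDerivAt_exp_div_one_add_exp (x : ℝ) :
    HasDerivAt (fun x => exp x / (1 + exp x)) (sech (x / 2) ^ 2 / 4) x := by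
  refine ((hasDerivAt_exp x).div ((hasDerivAt_exp x).const_add 1) (by positivity)).congr_deriv ?_
  rw [sech_half_sq]
  field_simp
  ring

lemma hasDerivAt_comp_affine {f : ℝ → ℝ} {f' : ℝ} (a b t : ℝ) (hf : HasDerivAt f f' (b + a * t)) :
    HasDerivAt (fun t => f (b + a * t)) (a * f') t := by
  have haff : HasDerivAt (fun t => b + a * t) a t := by
    simpa using ((hasDerivAt_id t).const_mul a).const_add b
  exact (hf.comp t haff).congr_deriv (mul_comm _ _)

lemma deriv_deriv_log_one_add_exp_affine (a b s : ℝ) :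
    deriv (deriv fun t => log (1 + exp (b + a * t))) s = a ^ 2 / 4 * sech ((b + a * s) / 2) ^ 2 := by
  have hfirst : deriv (fun t => log (1 + exp (b + a * t))) =
      fun t => a * (exp (b + a * t) / (1 + exp (b + a * t))) :=
    funext fun t => (hasDerivAt_comp_affine a b t (hasDerivAt_log_one_add_exp _)).deriv
  rw [hfirst, ((hasDerivAt_comp_affine a b s (hasDerivAt_exp_div_one_add_exp _)).const_mul a).deriv]
  ring

lemma neg_wavenumber_mul_velocity {σ c : ℝ} (hσ : 0 ≤ σ) (hc : c ≠ 0) (h1c : 1 + c ≠ 0) :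
    -((c ^ 2 - 1) / (√σ * c) * (σ * c / (1 + c) ^ 2)) = √σ * ((1 - c) / (1 + c)) := by
  obtain ⟨r, hr, rfl⟩ : ∃ r, 0 ≤ r ∧ σ = r ^ 2 := ⟨√σ, sqrt_nonneg σ, (sq_sqrt hσ).symm⟩
  rw [sqrt_sq hr]
  rcases eq_or_ne r 0 with rfl | hr0
  · simp
  field_simp
  ring

lemma mul_one_add_mul_exp_one_add_inv_mul_exp {c : ℝ} (hc : c ≠ 0) (x : ℝ) :
    (1 + c * exp x) * (1 + c⁻¹ * exp x) = (1 + exp x) ^ 2 + (1 - c) ^ 2 / c * exp x := by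
  field_simp
  ring

lemma sq_one_add_exp_div_eq_inv_one_add_sech_sq {c : ℝ} (hc : c ≠ 0) (x : ℝ) :
    (1 + exp x) ^ 2 / ((1 + c * exp x) * (1 + c⁻¹ * exp x))
      = (1 + (1 - c) ^ 2 / (4 * c) * sech (x / 2) ^ 2)⁻¹ := by
  have hexp : 1 + exp x ≠ 0 := by positivity
  rw [mul_one_add_mul_exp_one_add_inv_mul_exp hc, sech_half_sq, ← inv_div]
  congr 1
  field_simp

theorem one_soliton_profile_general (σ c : ℝ) (hσ : 0 < σ) (hc : 0 < c)
    (k v : ℝ)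
    (hk : k = (c ^ 2 - 1) / (Real.sqrt σ * c))
    (hv : v = σ * c / (1 + c) ^ 2)
    (θ : ℝ → ℝ → ℝ) (hθ : θ = fun y s => k * (y - v * s)) :
    ∀ y s : ℝ,
      (-(deriv (deriv (fun s' => Real.log (1 + Real.exp (θ y s')))) s)
        = -(σ / 4) * ((1 - c) / (1 + c)) ^ 2 * (sech (θ y s / 2)) ^ 2) ∧
      ((1 + Real.exp (θ y s)) ^ 2 /
          ((1 + c * Real.exp (θ y s)) * (1 + c⁻¹ * Real.exp (θ y s)))
        = (1 + (1 - c) ^ 2 / (4 * c) * (sech (θ y s / 2)) ^ 2)⁻¹) := by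
  intro y s
  have hθy : θ y = fun t => k * y + -(k * v) * t := by
    rw [hθ]
    funext t
    ring
  have hω : -(k * v) = √σ * ((1 - c) / (1 + c)) := by
    rw [hk, hv]
    exact neg_wavenumber_mul_velocity hσ.le hc.ne' (by positivity)
  refine ⟨?_, sq_one_add_exp_div_eq_inv_one_add_sech_sq hc.ne' _⟩
  rw [hθy, deriv_deriv_log_one_add_exp_affine, hω, mul_pow, sq_sqrt hσ.le]
  ring

/-- the explicit one-soliton profiles u and ρ of the
two-component Hunter-Saxton equation in the hodograph coordinates (y,s). -/
theorem one_soliton_profile (σ c : ℝ) (hσ : 0 < σ) (hc : 0 < c) (hc1 : c ≠ 1)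
    (k v : ℝ)
    (hk : k = (c ^ 2 - 1) / (Real.sqrt σ * c))
    (hv : v = σ * c / (1 + c) ^ 2)
    (θ : ℝ → ℝ → ℝ) (hθ : θ = fun y s => k * (y - v * s)) :
    ∀ y s : ℝ,
      (-(deriv (deriv (fun s' => Real.log (1 + Real.exp (θ y s')))) s)
        = -(σ / 4) * ((1 - c) / (1 + c)) ^ 2 * (sech (θ y s / 2)) ^ 2) ∧
      ((1 + Real.exp (θ y s)) ^ 2 /
          ((1 + c * Real.exp (θ y s)) * (1 + c⁻¹ * Real.exp (θ y s)))
        = (1 + (1 - c) ^ 2 / (4 * c) * (sech (θ y s / 2)) ^ 2)⁻¹) :=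
  one_soliton_profile_general σ c hσ hc k v hk hv θ hθ
end
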